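/- arXiv:1801.08158 — 8 statements merged into one kernel-verified Lean document; each statement's English description precedes it below -/
import Mathlib

section
/- For every absolutely summable sequence f = (f_j)_{j≥1} of complex numbers, the Hankel operator H(f) is a compact operator on ℓ². -/
/-!
Writing `Γₖ` for the operator with matrix `[i + j = k]`, the Hankel operator is the series
`H(f) = ∑ₖ fₖ Γₖ`. Each `Γₖ` has finite rank and norm at most `1`, so the series converges
absolutely in operator norm, and its sum is compact because compact operators form a closed
subspace.
-/

open scoped ENNReal

section CompactOperator

variable {𝕜₁ 𝕜₂ : Type*} [NontriviallyNormedField 𝕜₁] [NormedField 𝕜₂] {σ₁₂ : 𝕜₁ →+* 𝕜₂}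
  {M₁ M₂ : Type*} [SeminormedAddCommGroup M₁] [NormedAddCommGroup M₂] [NormedSpace 𝕜₁ M₁]
  [NormedSpace 𝕜₂ M₂] [CompleteSpace M₂]

theorem isCompactOperator_tsum {ι : Type*} {T : ι → M₁ →SL[σ₁₂] M₂}
    (hT : ∀ i, IsCompactOperator (T i)) :
    IsCompactOperator (∑' i, T i : M₁ →SL[σ₁₂] M₂) :=
  tsum_mem (s := compactOperator σ₁₂ M₁ M₂) isClosed_setOfPred_isCompactOperator hT

end CompactOperator

namespace lp

variable (𝕜 : Type*) [NontriviallyNormedField 𝕜] {E : Type*} [NormedAddCommGroup E]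
  [NormedSpace 𝕜 E] {p : ℝ≥0∞} [Fact (1 ≤ p)]

/-- The operator with matrix entries `[i + j = k]`. -/
noncomputable def antidiag (k : ℕ) : lp (fun _ : ℕ => E) p →L[𝕜] lp (fun _ : ℕ => E) p :=
  ∑ i ∈ Finset.range (k + 1), singleContinuousLinearMap 𝕜 _ p i ∘L evalCLM 𝕜 _ p (k - i)

variable {𝕜}

theorem antidiag_apply (k : ℕ) (x : lp (fun _ : ℕ => E) p) :
    antidiag 𝕜 k x = ∑ i ∈ Finset.range (k + 1), lp.single p i (x (k - i)) := by
  simp only [antidiag, sum_apply, ContinuousLinearMap.comp_apply, singleContinuousLinearMap_apply]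
  rfl

theorem antidiag_apply_apply (k : ℕ) (x : lp (fun _ : ℕ => E) p) (i : ℕ) :
    antidiag 𝕜 k x i = if i ≤ k then x (k - i) else 0 := by
  rw [antidiag_apply, lp.coeFn_sum, Finset.sum_apply]
  simp [Pi.single_apply]

theorem norm_antidiag_apply_le (hp : p ≠ ∞) (k : ℕ) (x : lp (fun _ : ℕ => E) p) :
    ‖antidiag 𝕜 k x‖ ≤ ‖x‖ := by
  have hp' : 0 < p.toReal := ENNReal.toReal_pos (zero_lt_one.trans_le Fact.out).ne' hp
  rw [← Real.rpow_le_rpow_iff (norm_nonneg _) (norm_nonneg _) hp', antidiag_apply,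
    lp.norm_sum_single hp']
  calc ∑ i ∈ Finset.range (k + 1), ‖x (k - i)‖ ^ p.toReal
      = ∑ i ∈ Finset.range (k + 1), ‖x i‖ ^ p.toReal :=
        Finset.sum_range_reflect (fun i => ‖x i‖ ^ p.toReal) (k + 1)
    _ ≤ ‖x‖ ^ p.toReal := lp.sum_rpow_le_norm_rpow hp' x _

theorem opNorm_antidiag_le (hp : p ≠ ∞) (k : ℕ) :
    ‖(antidiag 𝕜 k : lp (fun _ : ℕ => E) p →L[𝕜] _)‖ ≤ 1 :=
  ContinuousLinearMap.opNorm_le_bound _ zero_le_one fun x => by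
    simpa using norm_antidiag_apply_le hp k x

theorem isCompactOperator_antidiag [LocallyCompactSpace E] (k : ℕ) :
    IsCompactOperator (antidiag 𝕜 k : lp (fun _ : ℕ => E) p →L[𝕜] _) :=
  Submodule.sum_mem (compactOperator (RingHom.id 𝕜) _ _) fun i _ =>
    (isCompactOperator_of_locallyCompactSpace_dom (evalCLM 𝕜 (fun _ : ℕ => E) p (k - i))).clm_comp
      (singleContinuousLinearMap 𝕜 (fun _ : ℕ => E) p i)

theorem tsum_smul_antidiag_apply (f : ℕ → 𝕜) (x : lp (fun _ : ℕ => E) p) (i : ℕ) :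
    ∑' k, f k • antidiag 𝕜 k x i = ∑' j, f (i + j) • x j := by
  rw [← (add_right_injective i).tsum_eq]
  · simp [antidiag_apply_apply]
  · intro k hk
    have hik : i ≤ k := by
      by_contra h
      simp [antidiag_apply_apply, h] at hk
    exact ⟨k - i, Nat.add_sub_cancel' hik⟩

theorem hasSum_smul_antidiag [CompleteSpace E] (hp : p ≠ ∞) {f : ℕ → 𝕜}
    (hf : Summable fun k => ‖f k‖) {H : lp (fun _ : ℕ => E) p →L[𝕜] lp (fun _ : ℕ => E) p}
    (hH : ∀ x i, H x i = ∑' j, f (i + j) • x j) :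
    HasSum (fun k => f k • antidiag 𝕜 k) H := by
  have hsum : Summable fun k => f k • (antidiag 𝕜 k : lp (fun _ : ℕ => E) p →L[𝕜] _) :=
    .of_norm_bounded hf fun k => by
      rw [norm_smul]
      exact mul_le_of_le_one_right (norm_nonneg _) (opNorm_antidiag_le hp k)
  convert hsum.hasSum
  ext x i
  rw [hH, ← tsum_smul_antidiag_apply]
  exact ((hsum.hasSum.mapL (.apply 𝕜 _ x)).mapL (evalCLM 𝕜 (fun _ : ℕ => E) p i)).tsum_eq

end lp

/-- For every absolutely summable sequence `f = (f_j)_{j ≥ 1}` of complex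
numbers (here indexed by `ℕ`, with `f k` standing for `f_{k+1}`), the Hankel operator `H(f)`
on `ℓ²`, with entries `(H(f))_{i,j} = f_{i+j-1}` for `i, j ≥ 1`, is a compact operator. -/
theorem hankel_compact_on_l2
    (f : ℕ → ℂ) (hf : Summable fun k : ℕ => ‖f k‖)
    (H : lp (fun _ : ℕ => ℂ) 2 →L[ℂ] lp (fun _ : ℕ => ℂ) 2)
    (hH : ∀ (x : lp (fun _ : ℕ => ℂ) 2) (i : ℕ),
        (H x) i = ∑' j : ℕ, f (i + j) * x j) :
    IsCompactOperator H := by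
  rw [← (lp.hasSum_smul_antidiag ENNReal.ofNat_ne_top hf hH).tsum_eq]
  exact isCompactOperator_tsum fun k => (lp.isCompactOperator_antidiag k).smul (f k)
end

section
/- Let a, b be in the Wiener class and let E_a, E_b be compact operators on ℓ². Set A = T(a) + E_a and B = T(b) + E_b, and let c be the convolution of a and b. Then the operator AB − T(c) is a compact operator on ℓ². (In particular, the product of two Quasi-Toeplitz matrices is again a Quasi-Toeplitz matrix.) -/
/-!
Write `x̃` for the extension of `x ∈ ℓ²` by zero to `ℤ`. Since
`c_{j-i} = ∑_{m + l = j - i} a_m b_l`, we have `(T(c) x)_i = ∑_{m,l} a_m b_l x̃_{i+m+l}`, and the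
terms with `i + m ≥ 0` sum to `(T(a) T(b) x)_i` (the intermediate index is `k = i + m`). The
remaining terms, with `i + m < 0`, form an operator `D`, the operator-norm convergent sum of
`a_m b_l S_{m,l}`, where `S_{m,l} = truncShift m l` has norm at most `1` and range in the span of
the first `-m` coordinates. So `D` is compact, and `AB - T(c) = T(a) E_b + E_a T(b) + E_a E_b - D`.
-/

/-- The bounded operator `T` on `ℓ²` is the Toeplitz operator with symbol coefficients
`a : ℤ → ℂ`, i.e. `(T x)_i = ∑_{j} a_{j-i} x_j` (indices in `ℕ`). -/
def IsToeplitzOp (T : lp (fun _ : ℕ => ℂ) 2 →L[ℂ] lp (fun _ : ℕ => ℂ) 2)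
    (a : ℤ → ℂ) : Prop :=
  ∀ (x : lp (fun _ : ℕ => ℂ) 2) (i : ℕ), (T x) i = ∑' j : ℕ, a ((j : ℤ) - (i : ℤ)) * x j

open scoped ENNReal lp

namespace lp

variable {α β 𝕜 : Type*} [RCLike 𝕜] [DecidableEq α] {p : ℝ≥0∞} [Fact (1 ≤ p)]

noncomputable def finsetReindex (s : Finset α) (τ : α → β) :
    lp (fun _ : β => 𝕜) p →L[𝕜] lp (fun _ : α => 𝕜) p :=
  ∑ i ∈ s, singleContinuousLinearMap 𝕜 _ p i ∘L evalCLM 𝕜 _ p (τ i)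

theorem finsetReindex_eq_sum (s : Finset α) (τ : α → β) (x : lp (fun _ : β => 𝕜) p) :
    finsetReindex s τ x = ∑ i ∈ s, lp.single p i (x (τ i)) := by
  simp [finsetReindex, evalCLM]

theorem finsetReindex_apply (s : Finset α) (τ : α → β) (x : lp (fun _ : β => 𝕜) p) (i : α) :
    finsetReindex s τ x i = if i ∈ s then x (τ i) else 0 := by
  rw [finsetReindex_eq_sum, lp.coeFn_sum, Finset.sum_apply]
  simp [Pi.single_apply]

theorem isCompactOperator_finsetReindex (s : Finset α) (τ : α → β) :
    IsCompactOperator (finsetReindex (𝕜 := 𝕜) (p := p) s τ) := by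
  refine Submodule.sum_mem (compactOperator (RingHom.id 𝕜) _ _) fun i _ => ?_
  exact (isCompactOperator_of_locallyCompactSpace_dom (evalCLM 𝕜 (fun _ : β => 𝕜) p (τ i))
    ).clm_comp (singleContinuousLinearMap 𝕜 (fun _ : α => 𝕜) p i)

theorem norm_finsetReindex_le (hp : p ≠ ∞) {s : Finset α} {τ : α → β} (hτ : Set.InjOn τ s) :
    ‖(finsetReindex s τ : lp (fun _ : β => 𝕜) p →L[𝕜] lp (fun _ : α => 𝕜) p)‖ ≤ 1 := by
  classical
  have hp₀ : 0 < p.toReal := ENNReal.toReal_pos (zero_lt_one.trans_le Fact.out).ne' hp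
  refine ContinuousLinearMap.opNorm_le_bound _ zero_le_one fun x => ?_
  rw [one_mul, ← Real.rpow_le_rpow_iff (norm_nonneg _) (norm_nonneg _) hp₀,
    finsetReindex_eq_sum, lp.norm_sum_single hp₀]
  calc ∑ i ∈ s, ‖x (τ i)‖ ^ p.toReal = ∑ k ∈ s.image τ, ‖x k‖ ^ p.toReal :=
        (Finset.sum_image (f := fun k => ‖x k‖ ^ p.toReal) hτ).symm
    _ ≤ ‖x‖ ^ p.toReal := sum_rpow_le_norm_rpow hp₀ x _

end lp

noncomputable def zeroExtend {M : Type*} [Zero M] (x : ℕ → M) : ℤ → M :=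
  Function.extend ((↑) : ℕ → ℤ) x 0

section zeroExtend

variable {M : Type*} [Zero M]

@[simp]
theorem zeroExtend_natCast (x : ℕ → M) (n : ℕ) : zeroExtend x n = x n :=
  Nat.cast_injective.extend_apply x 0 n

theorem zeroExtend_of_neg (x : ℕ → M) {n : ℤ} (hn : n < 0) : zeroExtend x n = 0 := by
  refine Function.extend_apply' _ _ _ ?_
  rintro ⟨k, rfl⟩
  omega

theorem zeroExtend_eq_ite (x : ℕ → M) (n : ℤ) :
    zeroExtend x n = if 0 ≤ n then x n.toNat else 0 := by
  split_ifs with hn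
  · lift n to ℕ using hn
    simp
  · exact zeroExtend_of_neg x (not_le.mp hn)

theorem norm_zeroExtend_le {E : Type*} [NormedAddCommGroup E] {p : ℝ≥0∞} [Fact (1 ≤ p)]
    (x : lp (fun _ : ℕ => E) p) (n : ℤ) : ‖zeroExtend x n‖ ≤ ‖x‖ := by
  rw [zeroExtend_eq_ite]
  split_ifs
  · exact lp.norm_apply_le_norm (zero_lt_one.trans_le Fact.out).ne' x _
  · simp

theorem tsum_zeroExtend {R : Type*} [AddCommMonoid R] [TopologicalSpace R] (x : ℕ → R) :
    ∑' n : ℤ, zeroExtend x n = ∑' k : ℕ, x k :=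
  tsum_extend_zero Nat.cast_injective x

end zeroExtend

section Toeplitz

variable {T : ℓ²(ℕ, ℂ) →L[ℂ] ℓ²(ℕ, ℂ)} {a : ℤ → ℂ}

theorem IsToeplitzOp.apply_eq_tsum_int (hT : IsToeplitzOp T a) (x : ℓ²(ℕ, ℂ)) (i : ℕ) :
    T x i = ∑' m : ℤ, a m * zeroExtend x (i + m) := by
  have hmul : (fun n : ℤ => a (n - i) * zeroExtend x n) =
      zeroExtend fun j : ℕ => a ((j : ℤ) - i) * x j := by
    ext n
    rcases lt_or_ge n 0 with hn | hn
    · simp [zeroExtend_of_neg _ hn]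
    · lift n to ℕ using hn
      simp
  rw [hT, ← tsum_zeroExtend, ← hmul, ← (Equiv.addLeft (i : ℤ)).tsum_eq]
  simp

theorem IsToeplitzOp.zeroExtend_apply (hT : IsToeplitzOp T a) (x : ℓ²(ℕ, ℂ)) (n : ℤ) :
    zeroExtend (T x) n = if 0 ≤ n then ∑' m : ℤ, a m * zeroExtend x (n + m) else 0 := by
  split_ifs with hn
  · lift n to ℕ using hn
    simp [hT.apply_eq_tsum_int]
  · exact zeroExtend_of_neg _ (not_le.mp hn)

end Toeplitz

noncomputable def truncShift (m l : ℤ) : ℓ²(ℕ, ℂ) →L[ℂ] ℓ²(ℕ, ℂ) :=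
  lp.finsetReindex ((Finset.range (-m).toNat).filter fun i => 0 ≤ (i : ℤ) + m + l)
    fun i => ((i : ℤ) + m + l).toNat

theorem truncShift_apply (m l : ℤ) (x : ℓ²(ℕ, ℂ)) (i : ℕ) :
    truncShift m l x i = if (i : ℤ) + m < 0 then zeroExtend x (i + m + l) else 0 := by
  rw [truncShift, lp.finsetReindex_apply, zeroExtend_eq_ite]
  simp only [Finset.mem_filter, Finset.mem_range]
  split_ifs <;> first | rfl | omega

theorem norm_truncShift_le (m l : ℤ) : ‖truncShift m l‖ ≤ 1 := by
  refine lp.norm_finsetReindex_le ENNReal.ofNat_ne_top fun i hi j hj hij => ?_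
  simp only [Finset.coe_filter, Set.mem_ofPred_eq] at hi hj
  omega

theorem isCompactOperator_truncShift (m l : ℤ) : IsCompactOperator (truncShift m l) :=
  lp.isCompactOperator_finsetReindex _ _

/-- The correction `T(c) - T(a) T(b)`, a product of two Hankel operators, expanded over pairs of
symbol indices: this makes the series converge absolutely in operator norm, with terms of finite
rank. -/
noncomputable def hankelProduct (a b : ℤ → ℂ) : ℓ²(ℕ, ℂ) →L[ℂ] ℓ²(ℕ, ℂ) :=
  ∑' p : ℤ × ℤ, (a p.1 * b p.2) • truncShift p.1 p.2

theorem isCompactOperator_hankelProduct (a b : ℤ → ℂ) :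
    IsCompactOperator (hankelProduct a b) :=
  tsum_mem (s := compactOperator (RingHom.id ℂ) ℓ²(ℕ, ℂ) ℓ²(ℕ, ℂ))
    isClosed_setOfPred_isCompactOperator fun _ =>
      Submodule.smul_mem _ _ (isCompactOperator_truncShift _ _)

section ToeplitzProduct

variable {a b c : ℤ → ℂ}

theorem summable_hankelProduct_terms (ha : Summable fun k => ‖a k‖)
    (hb : Summable fun k => ‖b k‖) :
    Summable fun p : ℤ × ℤ => (a p.1 * b p.2) • truncShift p.1 p.2 := by
  refine .of_norm_bounded (ha.mul_of_nonneg hb (fun _ => norm_nonneg _) fun _ => norm_nonneg _)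
    fun p => ?_
  rw [norm_smul, norm_mul]
  exact mul_le_of_le_one_right (by positivity) (norm_truncShift_le _ _)

theorem hankelProduct_apply (ha : Summable fun k => ‖a k‖) (hb : Summable fun k => ‖b k‖)
    (x : ℓ²(ℕ, ℂ)) (i : ℕ) :
    hankelProduct a b x i = ∑' p : ℤ × ℤ,
      if (i : ℤ) + p.1 < 0 then a p.1 * b p.2 * zeroExtend x (i + p.1 + p.2) else 0 := by
  have := ((lp.evalCLM ℂ (fun _ : ℕ => ℂ) 2 i).comp
    (ContinuousLinearMap.apply ℂ ℓ²(ℕ, ℂ) x)).map_tsum (summable_hankelProduct_terms ha hb)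
  refine this.trans (tsum_congr fun p => ?_)
  simp [lp.evalCLM, truncShift_apply, mul_ite]

theorem summable_symbol_mul_zeroExtend (ha : Summable fun k => ‖a k‖)
    (hb : Summable fun k => ‖b k‖) (x : ℓ²(ℕ, ℂ)) (i : ℕ) (P : ℤ × ℤ → Prop) [DecidablePred P] :
    Summable fun p : ℤ × ℤ => if P p then a p.1 * b p.2 * zeroExtend x (i + p.1 + p.2) else 0 := by
  refine .of_norm_bounded ((ha.mul_of_nonneg hb (fun _ => norm_nonneg _)
    fun _ => norm_nonneg _).mul_right ‖x‖) fun p => ?_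
  split_ifs
  · rw [norm_mul, norm_mul]
    exact mul_le_mul_of_nonneg_left (norm_zeroExtend_le x _) (by positivity)
  · rw [norm_zero]
    positivity

variable {Ta Tb Tc : ℓ²(ℕ, ℂ) →L[ℂ] ℓ²(ℕ, ℂ)}

theorem IsToeplitzOp.apply_eq_tsum_prod (ha : Summable fun k => ‖a k‖)
    (hb : Summable fun k => ‖b k‖) (hc : ∀ k, c k = ∑' m, a m * b (k - m))
    (hTc : IsToeplitzOp Tc c) (x : ℓ²(ℕ, ℂ)) (i : ℕ) :
    Tc x i = ∑' p : ℤ × ℤ, a p.1 * b p.2 * zeroExtend x (i + p.1 + p.2) := by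
  set G : ℤ × ℤ → ℂ := fun p => a p.1 * b p.2 * zeroExtend x (i + p.1 + p.2)
  have hG : Summable G := by simpa using summable_symbol_mul_zeroExtend ha hb x i fun _ => True
  let e : ℤ × ℤ ≃ ℤ × ℤ :=
    { toFun := fun p => (p.1 + p.2, p.1), invFun := fun q => (q.2, q.1 - q.2),
      left_inv := fun p => by simp, right_inv := fun q => by simp }
  set H : ℤ × ℤ → ℂ := fun q => a q.2 * b (q.1 - q.2) * zeroExtend x (i + q.1)
  have hHG : H ∘ e = G := by
    ext p
    simp only [Function.comp_apply, H, G, e, Equiv.coe_fn_mk, add_sub_cancel_left, add_assoc]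
  have hH : Summable H := e.summable_iff.mp (hHG ▸ hG)
  calc Tc x i = ∑' n, ∑' m, H (n, m) := by
        simp only [hTc.apply_eq_tsum_int, hc, ← tsum_mul_right, H]
    _ = ∑' q, H q := (hH.tsum_prod' hH.prod_factor).symm
    _ = ∑' p, G p := by rw [← hHG, ← e.tsum_eq]; rfl

theorem IsToeplitzOp.comp_apply_eq_tsum_prod (ha : Summable fun k => ‖a k‖)
    (hb : Summable fun k => ‖b k‖) (hTa : IsToeplitzOp Ta a) (hTb : IsToeplitzOp Tb b)
    (x : ℓ²(ℕ, ℂ)) (i : ℕ) :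
    (Ta ∘L Tb) x i = ∑' p : ℤ × ℤ,
      if 0 ≤ (i : ℤ) + p.1 then a p.1 * b p.2 * zeroExtend x (i + p.1 + p.2) else 0 := by
  have hG := summable_symbol_mul_zeroExtend ha hb x i fun p => 0 ≤ (i : ℤ) + p.1
  rw [hG.tsum_prod' hG.prod_factor]
  simp only [ContinuousLinearMap.comp_apply, hTa.apply_eq_tsum_int, hTb.zeroExtend_apply]
  refine tsum_congr fun m => ?_
  split_ifs
  · simp only [← tsum_mul_left, mul_assoc, add_assoc]
  · simp

theorem IsToeplitzOp.eq_comp_add_hankelProduct (ha : Summable fun k => ‖a k‖)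
    (hb : Summable fun k => ‖b k‖) (hc : ∀ k, c k = ∑' m, a m * b (k - m))
    (hTa : IsToeplitzOp Ta a) (hTb : IsToeplitzOp Tb b) (hTc : IsToeplitzOp Tc c) :
    Tc = Ta ∘L Tb + hankelProduct a b := by
  ext x i
  rw [add_apply, lp.coeFn_add, Pi.add_apply, hTc.apply_eq_tsum_prod ha hb hc,
    hTa.comp_apply_eq_tsum_prod ha hb hTb, hankelProduct_apply ha hb,
    ← (summable_symbol_mul_zeroExtend ha hb x i _).tsum_add
      (summable_symbol_mul_zeroExtend ha hb x i _)]
  refine tsum_congr fun p => ?_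
  by_cases h : (i : ℤ) + p.1 < 0
  · simp [h, not_le.mpr h]
  · simp [h, not_lt.mp h]

end ToeplitzProduct

/-- Let `a, b` be in the Wiener class, `E_a, E_b` compact operators on `ℓ²`,
`A = T(a) + E_a`, `B = T(b) + E_b`, and let `c` be the convolution of `a` and `b`.
Then `AB - T(c)` is a compact operator on `ℓ²`: the product of two Quasi-Toeplitz matrices
is again Quasi-Toeplitz. -/
theorem qt_mul_qt_is_qt
    (a b : ℤ → ℂ) (ha : Summable fun k : ℤ => ‖a k‖) (hb : Summable fun k : ℤ => ‖b k‖)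
    (c : ℤ → ℂ) (hc : ∀ k : ℤ, c k = ∑' m : ℤ, a m * b (k - m))
    (Ta Tb Tc Ea Eb : lp (fun _ : ℕ => ℂ) 2 →L[ℂ] lp (fun _ : ℕ => ℂ) 2)
    (hTa : IsToeplitzOp Ta a) (hTb : IsToeplitzOp Tb b) (hTc : IsToeplitzOp Tc c)
    (hEa : IsCompactOperator Ea) (hEb : IsCompactOperator Eb) :
    IsCompactOperator (((Ta + Ea) ∘L (Tb + Eb)) - Tc) := by
  have hdecomp : (Ta + Ea) ∘L (Tb + Eb) - Tc =
      Ta ∘L Eb + Ea ∘L Tb + Ea ∘L Eb - hankelProduct a b := by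
    rw [IsToeplitzOp.eq_comp_add_hankelProduct ha hb hc hTa hTb hTc]
    simp only [ContinuousLinearMap.add_comp, ContinuousLinearMap.comp_add]
    abel
  rw [hdecomp]
  exact (((hEb.clm_comp Ta).add (hEa.comp_clm Tb)).add (hEa.comp_clm Eb)).sub
    (isCompactOperator_hankelProduct a b)
end

section
/- Let α be a real number with α ≥ (1+√5)/2. Let a, b be in the Wiener class, let E_a, E_b be bounded operators on ℓ², set A = T(a) + E_a, B = T(b) + E_b, let c be the convolution of a and b, and set E_c = AB − T(c). Then α‖c‖_W + ‖E_c‖₂ ≤ (α‖a‖_W + ‖E_a‖₂)(α‖b‖_W + ‖E_b‖₂). (In particular, the norm ‖A‖_QT := α‖a‖_W + ‖E_a‖₂ is sub-multiplicative on Quasi-Toeplitz matrices for every α ≥ (1+√5)/2.) -/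
open scoped ENNReal
open Function

theorem ENNReal.tsum_mul_sq_le {ι : Type*} (w y : ι → ℝ≥0∞) :
    (∑' i, w i * y i) ^ 2 ≤ (∑' i, w i) * ∑' i, w i * y i ^ 2 := by
  have hsqrt : ∀ z : ℝ≥0∞, (z ^ (1 / 2 : ℝ)) ^ 2 = z := fun z => by
    rw [← ENNReal.rpow_natCast, ← ENNReal.rpow_mul]; norm_num
  have hsum : ∑' i, w i * y i ≤
      (∑' i, w i) ^ (1 / 2 : ℝ) * (∑' i, w i * y i ^ 2) ^ (1 / 2 : ℝ) := by
    refine ENNReal.summable.tsum_le_of_sum_le fun s => ?_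
    have h := ENNReal.inner_le_weight_mul_Lp_of_nonneg s (p := 2) (by norm_num) w y
    norm_num at h
    refine h.trans ?_
    gcongr <;> exact ENNReal.sum_le_tsum s
  calc (∑' i, w i * y i) ^ 2
      ≤ ((∑' i, w i) ^ (1 / 2 : ℝ) * (∑' i, w i * y i ^ 2) ^ (1 / 2 : ℝ)) ^ 2 := by gcongr
    _ = (∑' i, w i) * ∑' i, w i * y i ^ 2 := by rw [mul_pow, hsqrt, hsqrt]

theorem ENNReal.tsum_tsum_mul_comp_le {α β γ δ : Type*} (f : γ → ℝ≥0∞) (g : δ → ℝ≥0∞)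
    {p : α → γ} {q : α → β → δ} (hp : Injective p) (hq : ∀ l, Injective (q l)) :
    ∑' l, ∑' j, f (p l) * g (q l j) ≤ (∑' k, f k) * ∑' k, g k :=
  calc ∑' l, ∑' j, f (p l) * g (q l j)
      = ∑' l, f (p l) * ∑' j, g (q l j) := by simp only [ENNReal.tsum_mul_left]
    _ ≤ ∑' l, f (p l) * ∑' k, g k := by
        gcongr with l; exact ENNReal.tsum_comp_le_tsum_of_injective (hq l) g
    _ ≤ (∑' k, f k) * ∑' k, g k := by
        rw [ENNReal.tsum_mul_right]; gcongr; exact ENNReal.tsum_comp_le_tsum_of_injective hp f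

theorem ofReal_tsum_norm {ι E : Type*} [SeminormedAddCommGroup E] {f : ι → E}
    (hf : Summable fun i => ‖f i‖) : ENNReal.ofReal (∑' i, ‖f i‖) = ∑' i, ‖f i‖ₑ := by
  simp only [ENNReal.ofReal_tsum_of_nonneg (fun i => norm_nonneg _) hf, ofReal_norm]

theorem tsum_norm_eq_toReal_tsum_enorm {ι E : Type*} [SeminormedAddCommGroup E] (f : ι → E) :
    ∑' i, ‖f i‖ = (∑' i, ‖f i‖ₑ).toReal := by
  rw [ENNReal.tsum_toReal_eq fun i => enorm_ne_top]
  simp only [toReal_enorm]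

theorem lp.tsum_enorm_sq {ι : Type*} {E : ι → Type*} [∀ i, NormedAddCommGroup (E i)]
    (f : lp E 2) : ∑' i, ‖f i‖ₑ ^ 2 = ENNReal.ofReal (‖f‖ ^ 2) := by
  have h2 : (0 : ℝ) < (2 : ℝ≥0∞).toReal := by norm_num
  have hpow := lp.norm_rpow_eq_tsum h2 f
  have hsum := (lp.memℓp f).summable h2
  simp only [ENNReal.toReal_ofNat, Real.rpow_two] at hpow hsum
  rw [hpow, ENNReal.ofReal_tsum_of_nonneg (fun i => sq_nonneg _) hsum]
  simp only [ENNReal.ofReal_pow (norm_nonneg _), ofReal_norm]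

theorem lp.norm_le_of_tsum_enorm_sq_le {ι κ : Type*} {E : ι → Type*} {F : κ → Type*}
    [∀ i, NormedAddCommGroup (E i)] [∀ j, NormedAddCommGroup (F j)]
    {f : lp E 2} {g : lp F 2} {C : ℝ} (hC : 0 ≤ C)
    (h : ∑' i, ‖f i‖ₑ ^ 2 ≤ ENNReal.ofReal C ^ 2 * ∑' j, ‖g j‖ₑ ^ 2) : ‖f‖ ≤ C * ‖g‖ := by
  rw [lp.tsum_enorm_sq, lp.tsum_enorm_sq, ← ENNReal.ofReal_pow hC,
    ← ENNReal.ofReal_mul (by positivity), ENNReal.ofReal_le_ofReal_iff (by positivity),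
    ← mul_pow] at h
  exact (pow_le_pow_iff_left₀ (norm_nonneg _) (by positivity) two_ne_zero).1 h

def IsMatrixOp {ι κ 𝕜 : Type*} [NontriviallyNormedField 𝕜]
    (T : lp (fun _ : κ => 𝕜) 2 →L[𝕜] lp (fun _ : ι => 𝕜) 2) (H : ι → κ → 𝕜) : Prop :=
  ∀ (x : lp (fun _ : κ => 𝕜) 2) (i : ι), T x i = ∑' j, H i j * x j

/-- Schur test: weighted Cauchy–Schwarz in each row, then the column bound after swapping sums. -/
theorem IsMatrixOp.norm_le_of_tsum_enorm_le {ι κ 𝕜 : Type*} [NontriviallyNormedField 𝕜]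
    {T : lp (fun _ : κ => 𝕜) 2 →L[𝕜] lp (fun _ : ι => 𝕜) 2} {H : ι → κ → 𝕜}
    (hT : IsMatrixOp T H) {M : ℝ} (hM : 0 ≤ M)
    (hrow : ∀ i, ∑' j, ‖H i j‖ₑ ≤ ENNReal.ofReal M)
    (hcol : ∀ j, ∑' i, ‖H i j‖ₑ ≤ ENNReal.ofReal M) : ‖T‖ ≤ M := by
  refine T.opNorm_le_bound hM fun x => lp.norm_le_of_tsum_enorm_sq_le hM ?_
  have hentry : ∀ i, ‖T x i‖ₑ ^ 2 ≤ ENNReal.ofReal M * ∑' j, ‖H i j‖ₑ * ‖x j‖ₑ ^ 2 := fun i =>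
    calc ‖T x i‖ₑ ^ 2 ≤ (∑' j, ‖H i j‖ₑ * ‖x j‖ₑ) ^ 2 := by
          rw [hT x i]
          gcongr
          simpa only [enorm_mul] using enorm_tsum_le_tsum_enorm (f := fun j => H i j * x j)
      _ ≤ (∑' j, ‖H i j‖ₑ) * ∑' j, ‖H i j‖ₑ * ‖x j‖ₑ ^ 2 := ENNReal.tsum_mul_sq_le _ _
      _ ≤ ENNReal.ofReal M * ∑' j, ‖H i j‖ₑ * ‖x j‖ₑ ^ 2 := by gcongr; exact hrow i
  calc ∑' i, ‖T x i‖ₑ ^ 2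
      ≤ ∑' i, ENNReal.ofReal M * ∑' j, ‖H i j‖ₑ * ‖x j‖ₑ ^ 2 := ENNReal.tsum_le_tsum hentry
    _ = ENNReal.ofReal M * ∑' j, (∑' i, ‖H i j‖ₑ) * ‖x j‖ₑ ^ 2 := by
        rw [ENNReal.tsum_mul_left, ENNReal.tsum_comm]; simp only [ENNReal.tsum_mul_right]
    _ ≤ ENNReal.ofReal M * ∑' j, ENNReal.ofReal M * ‖x j‖ₑ ^ 2 := by gcongr with j; exact hcol j
    _ = ENNReal.ofReal M ^ 2 * ∑' j, ‖x j‖ₑ ^ 2 := by rw [ENNReal.tsum_mul_left, ← mul_assoc, sq]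

local notation "ℓ2" => lp (fun _ : ℕ => ℂ) 2

section Toeplitz

variable {a b c : ℤ → ℂ}

theorem IsToeplitzOp.isMatrixOp {T : ℓ2 →L[ℂ] ℓ2} (hT : IsToeplitzOp T a) :
    IsMatrixOp T fun i j : ℕ => a (j - i) :=
  hT

theorem IsToeplitzOp.norm_le (ha : Summable fun k => ‖a k‖) {T : ℓ2 →L[ℂ] ℓ2}
    (hT : IsToeplitzOp T a) : ‖T‖ ≤ ∑' k, ‖a k‖ := by
  refine hT.isMatrixOp.norm_le_of_tsum_enorm_le (by positivity) (fun i => ?_) (fun j => ?_) <;>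
    rw [ofReal_tsum_norm ha] <;>
    refine ENNReal.tsum_comp_le_tsum_of_injective (fun m n h => ?_) (fun k => ‖a k‖ₑ) <;>
    simpa using h

theorem tsum_norm_conv_le (ha : Summable fun k => ‖a k‖) (hb : Summable fun k => ‖b k‖)
    (hc : ∀ k, c k = ∑' m, a m * b (k - m)) :
    ∑' k, ‖c k‖ ≤ (∑' k, ‖a k‖) * ∑' k, ‖b k‖ := by
  rw [tsum_norm_eq_toReal_tsum_enorm]
  refine ENNReal.toReal_le_of_le_ofReal (by positivity) ?_
  rw [ENNReal.ofReal_mul (by positivity), ofReal_tsum_norm ha, ofReal_tsum_norm hb]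
  calc ∑' k, ‖c k‖ₑ ≤ ∑' k, ∑' m, ‖a m‖ₑ * ‖b (k - m)‖ₑ := by
        gcongr with k
        rw [hc k]
        simpa only [enorm_mul] using enorm_tsum_le_tsum_enorm (f := fun m => a m * b (k - m))
    _ = ∑' m, ∑' k, ‖a m‖ₑ * ‖b (k - m)‖ₑ := ENNReal.tsum_comm
    _ ≤ (∑' k, ‖a k‖ₑ) * ∑' k, ‖b k‖ₑ :=
        ENNReal.tsum_tsum_mul_comp_le _ _ injective_id fun m => sub_left_injective

theorem summable_toeplitz_comp_family (ha : Summable fun k => ‖a k‖)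
    (hb : Summable fun k => ‖b k‖) (x : ℓ2) (i : ℕ) :
    Summable fun p : ℤ × ℕ => a (p.1 - i) * b (p.2 - p.1) * x p.2 := by
  refine Summable.of_norm (tsum_enorm_ne_top_iff_summable_norm.1 (lt_top_iff_ne_top.1 ?_))
  have hx : ∀ j, ‖x j‖ₑ ≤ ‖x‖ₑ := fun j => by
    simpa only [← ofReal_norm] using
      ENNReal.ofReal_le_ofReal (lp.norm_apply_le_norm two_ne_zero x j)
  calc ∑' p : ℤ × ℕ, ‖a (p.1 - i) * b (p.2 - p.1) * x p.2‖ₑ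
      ≤ ∑' (k : ℤ) (j : ℕ), ‖a (k - i)‖ₑ * ‖b (j - k)‖ₑ * ‖x‖ₑ := by
        rw [ENNReal.tsum_prod']; gcongr with k j; simp only [enorm_mul]; gcongr; exact hx j
    _ ≤ (∑' k, ‖a k‖ₑ) * (∑' k, ‖b k‖ₑ) * ‖x‖ₑ := by
        simp only [ENNReal.tsum_mul_right]
        gcongr
        exact ENNReal.tsum_tsum_mul_comp_le _ _ sub_left_injective fun k =>
          sub_left_injective.comp Nat.cast_injective
    _ < ⊤ := by
        rw [← ofReal_tsum_norm ha, ← ofReal_tsum_norm hb]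
        exact ENNReal.mul_lt_top (ENNReal.mul_lt_top ENNReal.ofReal_lt_top ENNReal.ofReal_lt_top)
          enorm_lt_top

/-- The product `H(a⁻)H(b⁺)` of the Hankel matrices `H(a⁻)ᵢₗ = a₋₍ᵢ₊ₗ₊₁₎` and
`H(b⁺)ₗⱼ = bⱼ₊ₗ₊₁` (indices from `0`). -/
noncomputable def toeplitzDefect (a b : ℤ → ℂ) (i j : ℕ) : ℂ :=
  ∑' l : ℕ, a (-((l : ℤ) + 1) - i) * b (j + (l : ℤ) + 1)

/-- Writing `c (j - i) = ∑ₖ a (k - i) b (j - k)`, the terms with `k ≥ 0` make up `T(a)T(b)` and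
those with `k < 0` the defect. -/
theorem isMatrixOp_toeplitz_sub_comp (ha : Summable fun k => ‖a k‖) (hb : Summable fun k => ‖b k‖)
    (hc : ∀ k, c k = ∑' m, a m * b (k - m)) {Ta Tb Tc : ℓ2 →L[ℂ] ℓ2}
    (hTa : IsToeplitzOp Ta a) (hTb : IsToeplitzOp Tb b) (hTc : IsToeplitzOp Tc c) :
    IsMatrixOp (Tc - Ta ∘L Tb) (toeplitzDefect a b) := by
  intro x i
  set f : ℤ → ℕ → ℂ := fun k j => a (k - i) * b (j - k) * x j
  have hf : Summable (uncurry f) := summable_toeplitz_comp_family ha hb x i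
  have hg : Summable fun k => ∑' j, f k j := hf.prod
  have hTcx : Tc x i = ∑' (k : ℤ) (j : ℕ), f k j := by
    rw [hTc x i, ← hf.tsum_comm]
    refine tsum_congr fun j => ?_
    rw [hc, ← (Equiv.subRight (i : ℤ)).tsum_eq, ← tsum_mul_right]
    refine tsum_congr fun k => ?_
    simp only [Equiv.subRight_apply, f]
    ring_nf
  have hTaTbx : Ta (Tb x) i = ∑' (n : ℕ) (j : ℕ), f n j := by
    rw [hTa]
    refine tsum_congr fun n => ?_
    rw [hTb x n, ← tsum_mul_left]
    exact tsum_congr fun j => (mul_assoc _ _ _).symm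
  have hneg : ∑' (l : ℕ) (j : ℕ), f (-((l : ℤ) + 1)) j = ∑' j, toeplitzDefect a b i j * x j := by
    have hinj : Injective fun p : ℕ × ℕ => ((-((p.1 : ℤ) + 1), p.2) : ℤ × ℕ) := by
      intro p q h
      simp only [Prod.mk.injEq] at h
      exact Prod.ext (by omega) h.2
    have hf' : Summable (uncurry fun (l : ℕ) j => f (-((l : ℤ) + 1)) j) :=
      (hf.comp_injective hinj :)
    rw [← hf'.tsum_comm]
    refine tsum_congr fun j => ?_
    rw [toeplitzDefect, ← tsum_mul_right]
    refine tsum_congr fun l => ?_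
    simp only [f]
    ring_nf
  have hsplit := tsum_of_nat_of_neg_add_one (f := fun k => ∑' j, f k j)
    (hg.comp_injective Nat.cast_injective) (hg.comp_injective fun m n h => by simpa using h)
  change Tc x i - Ta (Tb x) i = _
  rw [hTcx, hsplit, hTaTbx, hneg, add_sub_cancel_left]

theorem enorm_toeplitzDefect_le (i j : ℕ) :
    ‖toeplitzDefect a b i j‖ₑ ≤ ∑' l : ℕ, ‖a (-((l : ℤ) + 1) - i)‖ₑ * ‖b (j + (l : ℤ) + 1)‖ₑ := by
  simp only [toeplitzDefect, ← enorm_mul]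
  exact enorm_tsum_le_tsum_enorm

theorem tsum_enorm_toeplitzDefect_row_le (i : ℕ) :
    ∑' j, ‖toeplitzDefect a b i j‖ₑ ≤ (∑' k, ‖a k‖ₑ) * ∑' k, ‖b k‖ₑ :=
  calc ∑' j, ‖toeplitzDefect a b i j‖ₑ
      ≤ ∑' (j : ℕ) (l : ℕ), ‖a (-((l : ℤ) + 1) - i)‖ₑ * ‖b (j + (l : ℤ) + 1)‖ₑ := by
        gcongr with j; exact enorm_toeplitzDefect_le i j
    _ = ∑' (l : ℕ) (j : ℕ), ‖a (-((l : ℤ) + 1) - i)‖ₑ * ‖b (j + (l : ℤ) + 1)‖ₑ :=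
        ENNReal.tsum_comm
    _ ≤ _ := ENNReal.tsum_tsum_mul_comp_le (fun k => ‖a k‖ₑ) (fun k => ‖b k‖ₑ)
        (fun m n h => by omega) fun l m n h => by omega

theorem tsum_enorm_toeplitzDefect_col_le (j : ℕ) :
    ∑' i, ‖toeplitzDefect a b i j‖ₑ ≤ (∑' k, ‖a k‖ₑ) * ∑' k, ‖b k‖ₑ :=
  calc ∑' i, ‖toeplitzDefect a b i j‖ₑ
      ≤ ∑' (i : ℕ) (l : ℕ), ‖a (-((l : ℤ) + 1) - i)‖ₑ * ‖b (j + (l : ℤ) + 1)‖ₑ := by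
        gcongr with i; exact enorm_toeplitzDefect_le i j
    _ = ∑' (l : ℕ) (i : ℕ), ‖b (j + (l : ℤ) + 1)‖ₑ * ‖a (-((l : ℤ) + 1) - i)‖ₑ := by
        rw [ENNReal.tsum_comm]; simp only [mul_comm]
    _ ≤ (∑' k, ‖b k‖ₑ) * ∑' k, ‖a k‖ₑ :=
        ENNReal.tsum_tsum_mul_comp_le (fun k => ‖b k‖ₑ) (fun k => ‖a k‖ₑ)
          (fun m n h => by omega) fun l m n h => by omega
    _ = _ := mul_comm _ _

theorem norm_toeplitz_sub_comp_le (ha : Summable fun k => ‖a k‖) (hb : Summable fun k => ‖b k‖)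
    (hc : ∀ k, c k = ∑' m, a m * b (k - m)) {Ta Tb Tc : ℓ2 →L[ℂ] ℓ2}
    (hTa : IsToeplitzOp Ta a) (hTb : IsToeplitzOp Tb b) (hTc : IsToeplitzOp Tc c) :
    ‖Tc - Ta ∘L Tb‖ ≤ (∑' k, ‖a k‖) * ∑' k, ‖b k‖ := by
  have hAB : ENNReal.ofReal ((∑' k, ‖a k‖) * ∑' k, ‖b k‖) = (∑' k, ‖a k‖ₑ) * ∑' k, ‖b k‖ₑ := by
    rw [ENNReal.ofReal_mul (by positivity), ofReal_tsum_norm ha, ofReal_tsum_norm hb]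
  exact (isMatrixOp_toeplitz_sub_comp ha hb hc hTa hTb hTc).norm_le_of_tsum_enorm_le (by positivity)
    (fun i => hAB ▸ tsum_enorm_toeplitzDefect_row_le i)
    (fun j => hAB ▸ tsum_enorm_toeplitzDefect_col_le j)

end Toeplitz

theorem norm_add_mul_add_sub_le {R : Type*} [NormedRing R] (t e s f u : R) :
    ‖(t + e) * (s + f) - u‖ ≤ ‖u - t * s‖ + ‖t‖ * ‖f‖ + ‖e‖ * ‖s‖ + ‖e‖ * ‖f‖ := by
  have hsplit : (t + e) * (s + f) - u = -(u - t * s) + t * f + e * s + e * f := by noncomm_ring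
  rw [hsplit]
  refine (norm_add₄_le ..).trans ?_
  rw [norm_neg]
  gcongr <;> exact norm_mul_le _ _

theorem one_add_le_sq_of_goldenRatio_le {α : ℝ} (hα : Real.goldenRatio ≤ α) : α + 1 ≤ α ^ 2 := by
  nlinarith [Real.goldenRatio_sq, Real.goldenConj_neg, Real.goldenRatio_add_goldenConj]

/-- For every `α ≥ (1+√5)/2`, the norm `‖T(a)+E‖_QT = α‖a‖_W + ‖E‖₂`
is sub-multiplicative: if `A = T(a) + E_a`, `B = T(b) + E_b` with `a, b` in the Wiener
class and `E_a, E_b` bounded on `ℓ²`, `c` is the convolution of `a` and `b`, and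
`E_c = AB - T(c)`, then `α‖c‖_W + ‖E_c‖₂ ≤ (α‖a‖_W + ‖E_a‖₂)(α‖b‖_W + ‖E_b‖₂)`. -/
theorem qt_norm_submultiplicative
    (α : ℝ) (hα : (1 + Real.sqrt 5) / 2 ≤ α)
    (a b : ℤ → ℂ) (ha : Summable fun k : ℤ => ‖a k‖) (hb : Summable fun k : ℤ => ‖b k‖)
    (c : ℤ → ℂ) (hc : ∀ k : ℤ, c k = ∑' m : ℤ, a m * b (k - m))
    (Ta Tb Tc Ea Eb : lp (fun _ : ℕ => ℂ) 2 →L[ℂ] lp (fun _ : ℕ => ℂ) 2)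
    (hTa : IsToeplitzOp Ta a) (hTb : IsToeplitzOp Tb b) (hTc : IsToeplitzOp Tc c) :
    α * (∑' k : ℤ, ‖c k‖) + ‖((Ta + Ea) ∘L (Tb + Eb)) - Tc‖ ≤
      (α * (∑' k : ℤ, ‖a k‖) + ‖Ea‖) * (α * (∑' k : ℤ, ‖b k‖) + ‖Eb‖) := by
  set A := ∑' k, ‖a k‖
  set B := ∑' k, ‖b k‖
  have hA : 0 ≤ A := by positivity
  have hB : 0 ≤ B := by positivity
  have hα1 : 1 ≤ α := Real.one_lt_goldenRatio.le.trans hα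
  have hα2 : α + 1 ≤ α ^ 2 := one_add_le_sq_of_goldenRatio_le hα
  have hC : ∑' k, ‖c k‖ ≤ A * B := tsum_norm_conv_le ha hb hc
  have hEc : ‖(Ta + Ea) ∘L (Tb + Eb) - Tc‖ ≤ A * B + A * ‖Eb‖ + ‖Ea‖ * B + ‖Ea‖ * ‖Eb‖ :=
    (norm_add_mul_add_sub_le Ta Ea Tb Eb Tc).trans <| by
      gcongr
      exacts [norm_toeplitz_sub_comp_le ha hb hc hTa hTb hTc, hTa.norm_le ha, hTb.norm_le hb]
  nlinarith [mul_le_mul_of_nonneg_left hC (by positivity : 0 ≤ α),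
    mul_nonneg (by nlinarith : 0 ≤ α ^ 2 - α - 1) (mul_nonneg hA hB),
    mul_nonneg (sub_nonneg.2 hα1) (mul_nonneg hA (norm_nonneg Eb)),
    mul_nonneg (sub_nonneg.2 hα1) (mul_nonneg (norm_nonneg Ea) hB)]
end

section
/- Let a(z) = ∑_{j=−n₋}^{n₊} a_j z^j be a Laurent polynomial with complex coefficients. The Toeplitz operator T(a) is invertible as a bounded operator on ℓ² if and only if there exist polynomials u(z) = ∑_{i=0}^{n₊} u_i z^i and l(z) = ∑_{i=0}^{n₋} l_i z^i, both nonvanishing on the closed unit disk {z ∈ ℂ : |z| ≤ 1}, such that a(z) = u(z) · l(1/z), i.e., a_k = ∑_i u_i l_{i−k} for all k. -/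
open scoped lp ENNReal LaurentPolynomial

namespace lp

lemma summable_norm_rpow_two {E : Type*} [NormedAddCommGroup E] (x : ℓ²(ℕ, E)) :
    Summable fun i => ‖x i‖ ^ (2 : ℝ≥0∞).toReal :=
  (lp.memℓp x).summable (by norm_num)

variable (𝕜 E : Type*) [NontriviallyNormedField 𝕜] [NormedAddCommGroup E] [NormedSpace 𝕜 E]

noncomputable def shiftLeft : ℓ²(ℕ, E) →L[𝕜] ℓ²(ℕ, E) :=
  LinearMap.mkContinuous
    { toFun := fun x => ⟨fun i => x (i + 1),
        memℓp_gen <| (summable_nat_add_iff 1).2 (summable_norm_rpow_two x)⟩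
      map_add' := fun _ _ => rfl
      map_smul' := fun _ _ => rfl }
    1 fun x => by
      rw [one_mul]
      refine lp.norm_le_of_tsum_le (by norm_num) (norm_nonneg x) ?_
      rw [lp.norm_rpow_eq_tsum (by norm_num), (summable_norm_rpow_two x).tsum_eq_zero_add]
      exact le_add_of_nonneg_left (by positivity)

noncomputable def shiftRight : ℓ²(ℕ, E) →L[𝕜] ℓ²(ℕ, E) :=
  LinearMap.mkContinuous
    { toFun := fun x => ⟨fun | 0 => 0 | i + 1 => x i,
        memℓp_gen <| (summable_nat_add_iff 1).1 (summable_norm_rpow_two x)⟩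
      map_add' := fun x y => by ext (_ | i); exacts [(add_zero 0).symm, rfl]
      map_smul' := fun c _ => by ext (_ | i); exacts [(smul_zero c).symm, rfl] }
    1 fun x => by
      rw [one_mul]
      refine lp.norm_le_of_tsum_le (by norm_num) (norm_nonneg x) ?_
      have hs : Summable fun i => ‖(fun | 0 => 0 | i + 1 => x i : ℕ → E) i‖ ^ (2 : ℝ≥0∞).toReal :=
        (summable_nat_add_iff 1).1 (summable_norm_rpow_two x)
      rw [lp.norm_rpow_eq_tsum (by norm_num)]
      refine hs.tsum_eq_zero_add.trans_le ?_
      simp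

variable {𝕜 E}

@[simp] lemma shiftLeft_apply (x : ℓ²(ℕ, E)) (i : ℕ) : shiftLeft 𝕜 E x i = x (i + 1) := rfl

@[simp] lemma shiftRight_apply_zero (x : ℓ²(ℕ, E)) : shiftRight 𝕜 E x 0 = 0 := rfl

@[simp] lemma shiftRight_apply_succ (x : ℓ²(ℕ, E)) (i : ℕ) : shiftRight 𝕜 E x (i + 1) = x i :=
  rfl

lemma norm_shiftLeft_le : ‖shiftLeft 𝕜 E‖ ≤ 1 :=
  LinearMap.mkContinuous_norm_le _ zero_le_one _

lemma norm_shiftRight_le : ‖shiftRight 𝕜 E‖ ≤ 1 :=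
  LinearMap.mkContinuous_norm_le _ zero_le_one _

lemma shiftLeft_mul_shiftRight : shiftLeft 𝕜 E * shiftRight 𝕜 E = 1 := rfl

lemma shiftLeft_pow_apply (n : ℕ) (x : ℓ²(ℕ, E)) (i : ℕ) :
    (shiftLeft 𝕜 E ^ n) x i = x (i + n) := by
  induction n generalizing i with
  | zero => rfl
  | succ n ih =>
    rw [pow_succ', mul_apply_eq_comp, shiftLeft_apply, ih, add_right_comm, add_assoc]

lemma shiftRight_pow_apply (n : ℕ) (x : ℓ²(ℕ, E)) (i : ℕ) :
    (shiftRight 𝕜 E ^ n) x i = if n ≤ i then x (i - n) else 0 := by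
  induction n generalizing i with
  | zero => simp
  | succ n ih =>
    rw [pow_succ', mul_apply_eq_comp]
    rcases i with _ | i
    · simp
    · simp only [shiftRight_apply_succ, ih, Nat.add_le_add_iff_right, Nat.add_sub_add_right]

lemma shiftRight_single (i : ℕ) (c : E) :
    shiftRight 𝕜 E (lp.single 2 i c) = lp.single 2 (i + 1) c := by
  ext (_ | j) <;> simp [lp.single_apply, Pi.single_apply]

lemma shiftLeft_single_zero (c : E) : shiftLeft 𝕜 E (lp.single 2 0 c) = 0 := by
  ext j
  simp [lp.single_apply]

instance [Nontrivial E] : Nontrivial ℓ²(ℕ, E) := by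
  obtain ⟨c, hc⟩ := exists_ne (0 : E)
  refine ⟨lp.single 2 0 c, 0, fun h => hc ?_⟩
  simpa using congrArg (fun x : ℓ²(ℕ, E) => x 0) h

lemma not_isUnit_shiftLeft [Nontrivial E] : ¬ IsUnit (shiftLeft 𝕜 E) := by
  intro h
  obtain ⟨c, hc⟩ := exists_ne (0 : E)
  have hc0 := (ContinuousLinearMap.isHomeomorph_of_isUnit h).injective
    ((shiftLeft_single_zero c).trans (map_zero _).symm)
  exact hc (by simpa using congrArg (fun x : ℓ²(ℕ, E) => x 0) hc0)

lemma not_isUnit_shiftRight [Nontrivial E] : ¬ IsUnit (shiftRight 𝕜 E) := by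
  rintro ⟨u, hu⟩
  have h := shiftLeft_mul_shiftRight (𝕜 := 𝕜) (E := E)
  rw [← hu, Units.mul_eq_one_iff_eq_inv] at h
  exact not_isUnit_shiftLeft (h ▸ u⁻¹.isUnit)

lemma one_sub_smul_shiftRight_sum_single_pow (z : 𝕜) (c : E) (N : ℕ) :
    (1 - z • shiftRight 𝕜 E) (∑ k ∈ Finset.range N, lp.single 2 k (z ^ k • c)) =
      lp.single 2 0 c - lp.single 2 N (z ^ N • c) := by
  have hstep (k : ℕ) : (1 - z • shiftRight 𝕜 E) (lp.single 2 k (z ^ k • c)) =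
      lp.single 2 k (z ^ k • c) - lp.single 2 (k + 1) (z ^ (k + 1) • c) := by
    rw [sub_apply, smul_apply, shiftRight_single, ← lp.single_smul, smul_smul, ← pow_succ']
    rfl
  rw [map_sum, Finset.sum_congr rfl fun k _ => hstep k, Finset.sum_range_sub', pow_zero,
    one_smul]

lemma norm_sum_single_pow_sq {z : 𝕜} (hz : ‖z‖ = 1) (c : E) (N : ℕ) :
    ‖∑ k ∈ Finset.range N, lp.single 2 k (z ^ k • c)‖ ^ 2 = N * ‖c‖ ^ 2 := by
  have h := lp.norm_sum_single (E := fun _ : ℕ => E) (p := 2) (by norm_num)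
    (fun k => z ^ k • c) (Finset.range N)
  rw [ENNReal.toReal_ofNat, Real.rpow_two] at h
  rw [h]
  simp [norm_smul, hz]

/-- The vectors `∑_{k<N} z^k c eₖ` have norm `√N ‖c‖`, but their images under `1 - z R` have norm
at most `2 ‖c‖`: the operator `1 - z R` is not bounded below, so it has no left inverse. -/
lemma not_isUnit_mul_one_sub_smul_shiftRight [Nontrivial E] (S : ℓ²(ℕ, E) →L[𝕜] ℓ²(ℕ, E))
    {z : 𝕜} (hz : ‖z‖ = 1) : ¬ IsUnit (S * (1 - z • shiftRight 𝕜 E)) := by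
  rintro ⟨u, hu⟩
  obtain ⟨c, hc⟩ := exists_ne (0 : E)
  set K := ‖(↑u⁻¹ * S : ℓ²(ℕ, E) →L[𝕜] ℓ²(ℕ, E))‖
  have hbound (x : ℓ²(ℕ, E)) : ‖x‖ ≤ K * ‖(1 - z • shiftRight 𝕜 E) x‖ := by
    calc ‖x‖ = ‖(↑u⁻¹ * S) ((1 - z • shiftRight 𝕜 E) x)‖ := by
          rw [← mul_apply_eq_comp, mul_assoc, ← hu, Units.inv_mul, one_apply_eq_self]
      _ ≤ K * ‖(1 - z • shiftRight 𝕜 E) x‖ := ContinuousLinearMap.le_opNorm _ _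
  obtain ⟨N, hN⟩ := exists_nat_gt (4 * K ^ 2)
  set x : ℓ²(ℕ, E) := ∑ k ∈ Finset.range N, lp.single 2 k (z ^ k • c)
  have hx : ‖(1 - z • shiftRight 𝕜 E) x‖ ≤ 2 * ‖c‖ := by
    rw [one_sub_smul_shiftRight_sum_single_pow]
    refine (norm_sub_le _ _).trans ?_
    rw [lp.norm_single (by norm_num), lp.norm_single (by norm_num), norm_smul, norm_pow, hz,
      one_pow, one_mul, two_mul]
  have hNc : N * ‖c‖ ^ 2 ≤ 4 * K ^ 2 * ‖c‖ ^ 2 := by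
    calc N * ‖c‖ ^ 2 = ‖x‖ ^ 2 := (norm_sum_single_pow_sq hz c N).symm
      _ ≤ (K * (2 * ‖c‖)) ^ 2 := by
        gcongr
        exact (hbound x).trans (mul_le_mul_of_nonneg_left hx (norm_nonneg _))
      _ = 4 * K ^ 2 * ‖c‖ ^ 2 := by ring
  exact hN.not_ge (le_of_mul_le_mul_right hNc (by positivity))

end lp

open Polynomial lp
open LaurentPolynomial hiding C

theorem isUnit_aeval_of_norm_le_one {A : Type*} [NormedRing A] [NormedAlgebra ℂ A]
    [CompleteSpace A] [NormOneClass A] {a : A} (ha : ‖a‖ ≤ 1) {P : ℂ[X]}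
    (hP : ∀ z : ℂ, ‖z‖ ≤ 1 → P.eval z ≠ 0) : IsUnit (aeval a P) := by
  have := NormOneClass.nontrivial (G := A)
  rw [← spectrum.zero_notMem_iff ℂ, spectrum.map_polynomial_aeval]
  rintro ⟨z, hz, hPz⟩
  exact hP z ((spectrum.norm_le_norm_of_mem hz).trans ha) hPz

section LaurentAlgebra

variable {R : Type*} [CommSemiring R]

theorem toLaurent_monomial_mul_invert_toLaurent_monomial (m n : ℕ) (c d : R) :
    toLaurent (monomial m c) * invert (toLaurent (monomial n d)) = (c * d) • T ((m : ℤ) - n) := by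
  rw [toLaurent_C_mul_T, toLaurent_C_mul_T, map_mul, invert_C, invert_T,
    LaurentPolynomial.smul_eq_C_mul, T_sub, map_mul]
  ring

theorem toLaurent_mul_invert_mul_T (P Q : R[X]) (s : ℤ) :
    toLaurent P * invert (toLaurent Q) * T s =
      toLaurent (P * X ^ s.toNat) * invert (toLaurent (X ^ (-s).toNat * Q)) := by
  conv_lhs => rw [← Int.toNat_sub_toNat_neg s, T_sub]
  simp only [map_mul, map_pow, toLaurent_X, T_pow, invert_T, mul_one]
  ring

theorem toLaurent_eq_invert_reverse_mul_T (A : R[X]) :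
    toLaurent A = invert (toLaurent A.reverse) * T A.natDegree := by
  rw [toLaurent_reverse, map_mul, invert_T, involutive_invert, mul_assoc, ← T_add,
    neg_add_cancel, T_zero, mul_one]

theorem coeff_toLaurent_sum_monomial_mul_invert (u l : ℕ → R) (m n : ℕ) (k : ℤ) :
    (toLaurent (∑ i ∈ Finset.range m, monomial i (u i)) *
        invert (toLaurent (∑ j ∈ Finset.range n, monomial j (l j)))).coeff k =
      ∑ i ∈ Finset.range m, ∑ j ∈ Finset.range n, if (i : ℤ) - j = k then u i * l j else 0 := by
  simp only [map_sum, Finset.sum_mul_sum, toLaurent_monomial_mul_invert_toLaurent_monomial,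
    AddMonoidAlgebra.coeff_sum, Finset.sum_apply', AddMonoidAlgebra.coeff_smul_apply, T_apply,
    smul_eq_mul, mul_ite, mul_one, mul_zero]

theorem coeff_toLaurent_sum_monomial_mul_T {a : ℤ → R} {n n' : ℕ}
    (hsupp : ∀ k : ℤ, (k < -(n : ℤ) ∨ (n' : ℤ) < k) → a k = 0) :
    ⇑(toLaurent (∑ t ∈ Finset.range (n + n' + 1), monomial t (a (t - n))) *
      (T (-n) : R[T;T⁻¹])).coeff = a := by
  funext k
  simp only [map_sum, Finset.sum_mul, toLaurent_C_mul_T, mul_assoc, ← T_add, ← sub_eq_add_neg]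
  simp only [← single_eq_C_mul_T, AddMonoidAlgebra.coeff_sum, Finset.sum_apply',
    AddMonoidAlgebra.coeff_single, Finsupp.single_apply]
  by_cases hk : -(n : ℤ) ≤ k ∧ k ≤ n'
  · rw [Finset.sum_eq_single_of_mem (k + n).toNat (Finset.mem_range.2 (by omega))
      fun t _ ht => if_neg (by omega), if_pos (by omega)]
    congr 1
    omega
  · rw [hsupp k (by omega)]
    exact Finset.sum_eq_zero fun t ht => if_neg (by rw [Finset.mem_range] at ht; omega)

end LaurentAlgebra

namespace Polynomial

variable {𝕜 : Type*} [NormedField 𝕜]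

theorem exists_eq_mul_roots_outside_inside [IsAlgClosed 𝕜] {p : 𝕜[X]} (hp : p ≠ 0)
    (hcirc : ∀ z : 𝕜, ‖z‖ = 1 → p.eval z ≠ 0) :
    ∃ U A : 𝕜[X], p = U * A ∧ A.Monic ∧ (∀ z : 𝕜, ‖z‖ ≤ 1 → U.eval z ≠ 0) ∧
      ∀ z : 𝕜, A.IsRoot z → ‖z‖ < 1 := by
  set ins := p.roots.filter (‖·‖ < 1)
  set outs := p.roots.filter (¬ ‖·‖ < 1)
  have hmonic (s : Multiset 𝕜) : (s.map (X - C ·)).prod.Monic :=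
    monic_multiset_prod_of_monic _ _ fun ρ _ => monic_X_sub_C ρ
  have hroots (s : Multiset 𝕜) {z : 𝕜} (h : (s.map (X - C ·)).prod.IsRoot z) : z ∈ s := by
    rwa [← roots_multiset_prod_X_sub_C s, mem_roots (hmonic s).ne_zero]
  refine ⟨C p.leadingCoeff * (outs.map (X - C ·)).prod, (ins.map (X - C ·)).prod, ?_,
    hmonic ins, fun z hz hU => ?_, fun z hA => (Multiset.mem_filter.1 (hroots ins hA)).2⟩
  · conv_lhs => rw [← C_leadingCoeff_mul_prod_multiset_X_sub_C
      (IsAlgClosed.card_roots_eq_natDegree (p := p)), ← Multiset.filter_add_not (‖·‖ < 1) p.roots]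
    rw [Multiset.map_add, Multiset.prod_add]
    ring
  · rw [eval_mul, eval_C, mul_eq_zero] at hU
    obtain ⟨hzp, hz1⟩ :=
      Multiset.mem_filter.1 (hroots outs (hU.resolve_left (leadingCoeff_ne_zero.2 hp)))
    exact hcirc z (le_antisymm hz (not_lt.1 hz1)) (isRoot_of_mem_roots hzp)

theorem Monic.eval_reverse_ne_zero {A : 𝕜[X]} (hA : A.Monic)
    (hroots : ∀ z : 𝕜, A.IsRoot z → ‖z‖ < 1) {z : 𝕜} (hz : ‖z‖ ≤ 1) : A.reverse.eval z ≠ 0 := by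
  rcases eq_or_ne z 0 with rfl | hz0
  · rw [← coeff_zero_eq_eval_zero, coeff_zero_reverse, hA.leadingCoeff]
    exact one_ne_zero
  · let _ : Invertible z⁻¹ := invertibleOfNonzero (inv_ne_zero hz0)
    have h := eval₂_reverse_eq_zero_iff (RingHom.id 𝕜) z⁻¹ A
    rw [invOf_eq_inv, inv_inv] at h
    intro hrev
    have hinv := hroots z⁻¹ (h.1 hrev)
    rw [norm_inv] at hinv
    exact ((inv_lt_one₀ (norm_pos_iff.2 hz0)).1 hinv).not_ge hz

theorem exists_wienerHopf_factorization [IsAlgClosed 𝕜] {p : 𝕜[X]} (hp : p ≠ 0)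
    (hcirc : ∀ z : 𝕜, ‖z‖ = 1 → p.eval z ≠ 0) :
    ∃ (U B : 𝕜[X]) (m : ℕ), toLaurent p = toLaurent U * invert (toLaurent B) * T m ∧
      U.natDegree + m = p.natDegree ∧ B.natDegree ≤ m ∧
      (∀ z : 𝕜, ‖z‖ ≤ 1 → U.eval z ≠ 0) ∧ ∀ z : 𝕜, ‖z‖ ≤ 1 → B.eval z ≠ 0 := by
  obtain ⟨U, A, rfl, hA, hU, hAroots⟩ := exists_eq_mul_roots_outside_inside hp hcirc
  refine ⟨U, A.reverse, A.natDegree, ?_, ?_, reverse_natDegree_le A, hU,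
    fun z hz => hA.eval_reverse_ne_zero hAroots hz⟩
  · rw [map_mul, toLaurent_eq_invert_reverse_mul_T A, mul_assoc]
  · rw [natDegree_mul (left_ne_zero_of_mul hp) hA.ne_zero]

end Polynomial

theorem Finsupp.summable_apply_sub_mul (a : ℤ →₀ ℂ) (x : ℓ²(ℕ, ℂ)) (i : ℕ) :
    Summable fun j : ℕ => a ((j : ℤ) - i) * x j := by
  have hinj : Function.Injective fun j : ℕ => (j : ℤ) - i := fun j k h => by simpa using h
  exact summable_of_hasFiniteSupport
    ((a.hasFiniteSupport.fun_comp_of_injective hinj).fun_mul_left _)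

namespace IsToeplitzOp

variable {S S' : ℓ²(ℕ, ℂ) →L[ℂ] ℓ²(ℕ, ℂ)}

theorem unique {a : ℤ → ℂ} (h : IsToeplitzOp S a) (h' : IsToeplitzOp S' a) : S = S' := by
  ext x i
  rw [h, h']

theorem smul {a : ℤ → ℂ} (h : IsToeplitzOp S a) (c : ℂ) : IsToeplitzOp (c • S) (c • a) :=
  fun x i => by simp [h x i, ← tsum_mul_left, mul_assoc]

theorem add {a b : ℤ →₀ ℂ} (ha : IsToeplitzOp S a) (hb : IsToeplitzOp S' b) :
    IsToeplitzOp (S + S') ⇑(a + b) := fun x i => by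
  simp only [add_apply, lp.coeFn_add, Pi.add_apply, ha x i, hb x i, Finsupp.coe_add, add_mul]
  exact ((a.summable_apply_sub_mul x i).tsum_add (b.summable_apply_sub_mul x i)).symm

end IsToeplitzOp

theorem isToeplitzOp_shiftLeft_pow_mul_shiftRight_pow (m n : ℕ) :
    IsToeplitzOp (shiftLeft ℂ ℂ ^ m * shiftRight ℂ ℂ ^ n)
      ⇑(T ((m : ℤ) - n) : ℂ[T;T⁻¹]).coeff := by
  intro x i
  simp only [mul_apply_eq_comp, shiftLeft_pow_apply, shiftRight_pow_apply, T_apply, ite_mul,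
    one_mul, zero_mul]
  split_ifs with h
  · rw [tsum_eq_single (i + m - n) fun j hj => if_neg (by omega), if_pos (by omega)]
  · exact ((tsum_congr fun j => if_neg (by omega)).trans tsum_zero).symm

theorem isToeplitzOp_aeval_mul_aeval (P Q : ℂ[X]) :
    IsToeplitzOp (aeval (shiftLeft ℂ ℂ) P * aeval (shiftRight ℂ ℂ) Q)
      ⇑(toLaurent P * invert (toLaurent Q)).coeff := by
  induction P using Polynomial.induction_on' with
  | add P P' hP hP' => simpa only [map_add, add_mul, AddMonoidAlgebra.coeff_add] using hP.add hP'
  | monomial m c =>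
    induction Q using Polynomial.induction_on' with
    | add Q Q' hQ hQ' =>
      simpa only [map_add, mul_add, AddMonoidAlgebra.coeff_add] using hQ.add hQ'
    | monomial n d =>
      have hop : aeval (shiftLeft ℂ ℂ) (monomial m c) * aeval (shiftRight ℂ ℂ) (monomial n d) =
          (c * d) • (shiftLeft ℂ ℂ ^ m * shiftRight ℂ ℂ ^ n) := by
        simp only [aeval_monomial, Algebra.algebraMap_eq_smul_one, smul_mul_assoc, one_mul,
          mul_smul_comm, smul_smul, mul_comm d c]
      rw [hop, toLaurent_monomial_mul_invert_toLaurent_monomial, AddMonoidAlgebra.coeff_smul,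
        Finsupp.coe_smul]
      exact (isToeplitzOp_shiftLeft_pow_mul_shiftRight_pow m n).smul (c * d)

namespace IsToeplitzOp

variable {S : ℓ²(ℕ, ℂ) →L[ℂ] ℓ²(ℕ, ℂ)} {P Q : ℂ[X]} {s : ℤ}

theorem eq_aeval_mul_shifts_mul_aeval
    (h : IsToeplitzOp S ⇑(toLaurent P * invert (toLaurent Q) * (T s : ℂ[T;T⁻¹])).coeff) :
    S = aeval (shiftLeft ℂ ℂ) P * shiftLeft ℂ ℂ ^ s.toNat *
      (shiftRight ℂ ℂ ^ (-s).toNat * aeval (shiftRight ℂ ℂ) Q) := by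
  rw [toLaurent_mul_invert_mul_T] at h
  refine h.unique ?_
  convert isToeplitzOp_aeval_mul_aeval (P * X ^ s.toNat) (X ^ (-s).toNat * Q) using 1
  simp only [map_mul, map_pow, aeval_X, mul_assoc]

theorem isUnit_of_wienerHopf (h : IsToeplitzOp S ⇑(toLaurent P * invert (toLaurent Q)).coeff)
    (hP : ∀ z : ℂ, ‖z‖ ≤ 1 → P.eval z ≠ 0) (hQ : ∀ z : ℂ, ‖z‖ ≤ 1 → Q.eval z ≠ 0) :
    IsUnit S := by
  rw [h.unique (isToeplitzOp_aeval_mul_aeval P Q)]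
  exact (isUnit_aeval_of_norm_le_one (a := shiftLeft ℂ ℂ) norm_shiftLeft_le hP).mul
    (isUnit_aeval_of_norm_le_one (a := shiftRight ℂ ℂ) norm_shiftRight_le hQ)

theorem shift_eq_zero_of_isUnit (hS : IsUnit S)
    (h : IsToeplitzOp S ⇑(toLaurent P * invert (toLaurent Q) * (T s : ℂ[T;T⁻¹])).coeff)
    (hP : ∀ z : ℂ, ‖z‖ ≤ 1 → P.eval z ≠ 0) (hQ : ∀ z : ℂ, ‖z‖ ≤ 1 → Q.eval z ≠ 0) : s = 0 := by
  obtain ⟨uP, huP⟩ := isUnit_aeval_of_norm_le_one (a := shiftLeft ℂ ℂ) norm_shiftLeft_le hP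
  obtain ⟨uQ, huQ⟩ := isUnit_aeval_of_norm_le_one (a := shiftRight ℂ ℂ) norm_shiftRight_le hQ
  rw [h.eq_aeval_mul_shifts_mul_aeval, ← huP, ← huQ, mul_assoc, ← mul_assoc (_ ^ _),
    Units.isUnit_units_mul, Units.isUnit_mul_units] at hS
  rcases lt_trichotomy s 0 with hs | hs | hs
  · rw [Int.toNat_of_nonpos hs.le, pow_zero, one_mul, isUnit_pow_iff (by omega)] at hS
    exact absurd hS not_isUnit_shiftRight
  · exact hs
  · rw [Int.toNat_of_nonpos (by omega : -s ≤ 0), pow_zero, mul_one, isUnit_pow_iff (by omega)]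
      at hS
    exact absurd hS not_isUnit_shiftLeft

theorem eval_ne_zero_of_isUnit (hS : IsUnit S)
    (h : IsToeplitzOp S ⇑(toLaurent P * (T s : ℂ[T;T⁻¹])).coeff) {z : ℂ} (hz : ‖z‖ = 1) :
    P.eval z ≠ 0 := by
  intro hPz
  obtain ⟨q, rfl⟩ := dvd_iff_isRoot.2 hPz
  have hsymb : toLaurent ((X - C z) * q) * T s =
      toLaurent q * invert (toLaurent (1 - C z * X)) * T (s + 1) := by
    simp only [map_mul, map_sub, map_one, toLaurent_X, toLaurent_C, invert_T, invert_C, T_add]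
    have hT : (T (-1) * T 1 : ℂ[T;T⁻¹]) = 1 := by rw [← T_add, neg_add_cancel, T_zero]
    linear_combination (LaurentPolynomial.C z * toLaurent q * T s) * hT
  rw [hsymb] at h
  have hfactor : aeval (shiftRight ℂ ℂ) (1 - C z * X) = 1 - z • shiftRight ℂ ℂ := by
    simp [Algebra.smul_def]
  rw [h.eq_aeval_mul_shifts_mul_aeval, hfactor, ← mul_assoc] at hS
  exact not_isUnit_mul_one_sub_smul_shiftRight _ hz hS

theorem exists_wienerHopf_of_isUnit (hS : IsUnit S) {p : ℂ[X]} {n n' : ℕ}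
    (h : IsToeplitzOp S ⇑(toLaurent p * (T (-n) : ℂ[T;T⁻¹])).coeff)
    (hp : p.natDegree ≤ n + n') :
    ∃ U B : ℂ[X], U.natDegree ≤ n' ∧ B.natDegree ≤ n ∧ (∀ z : ℂ, ‖z‖ ≤ 1 → U.eval z ≠ 0) ∧
      (∀ z : ℂ, ‖z‖ ≤ 1 → B.eval z ≠ 0) ∧
      toLaurent p * T (-n) = toLaurent U * invert (toLaurent B) := by
  have hcirc (z : ℂ) (hz : ‖z‖ = 1) : p.eval z ≠ 0 := h.eval_ne_zero_of_isUnit hS hz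
  have hp0 : p ≠ 0 := fun hp0 => hcirc 1 norm_one (by simp [hp0])
  obtain ⟨U, B, m, hfac, hdeg, hB, hU, hBz⟩ := exists_wienerHopf_factorization hp0 hcirc
  have hsymb : toLaurent p * T (-n) = toLaurent U * invert (toLaurent B) * T ((m : ℤ) - n) := by
    rw [hfac, mul_assoc, ← T_add, sub_eq_add_neg]
  rw [hsymb] at h
  have hm : (m : ℤ) - n = 0 := h.shift_eq_zero_of_isUnit hS hU hBz
  exact ⟨U, B, by omega, by omega, hU, hBz, by rw [hsymb, hm, T_zero, mul_one]⟩

end IsToeplitzOp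

/-- Let `a(z) = ∑_{j=-n₋}^{n₊} a_j z^j` be a Laurent polynomial. The
Toeplitz operator `T(a)` is invertible as a bounded operator on `ℓ²` if and only if `a`
admits a Wiener–Hopf factorization `a(z) = u(z) l(1/z)`, with `u(z) = ∑_{i=0}^{n₊} u_i z^i`
and `l(z) = ∑_{i=0}^{n₋} l_i z^i` polynomials nonvanishing on the closed unit disk;
the factorization reads `a_k = ∑_{i-j=k} u_i l_j` on the level of coefficients. -/
theorem toeplitz_invertible_iff_wiener_hopf
    (nm np : ℕ) (a : ℤ → ℂ)
    (hsupp : ∀ k : ℤ, (k < -(nm : ℤ) ∨ (np : ℤ) < k) → a k = 0)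
    (Ta : lp (fun _ : ℕ => ℂ) 2 →L[ℂ] lp (fun _ : ℕ => ℂ) 2)
    (hTa : IsToeplitzOp Ta a) :
    IsUnit Ta ↔
      ∃ u l : ℕ → ℂ,
        (∀ z : ℂ, ‖z‖ ≤ 1 → ∑ i ∈ Finset.range (np + 1), u i * z ^ i ≠ 0) ∧
        (∀ z : ℂ, ‖z‖ ≤ 1 → ∑ i ∈ Finset.range (nm + 1), l i * z ^ i ≠ 0) ∧
        (∀ k : ℤ, a k =
          ∑ i ∈ Finset.range (np + 1), ∑ j ∈ Finset.range (nm + 1),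
            if (i : ℤ) - (j : ℤ) = k then u i * l j else 0) := by
  constructor
  · intro hunit
    rw [← coeff_toLaurent_sum_monomial_mul_T hsupp] at hTa ⊢
    obtain ⟨U, B, hU, hB, hUz, hBz, hfac⟩ := hTa.exists_wienerHopf_of_isUnit hunit
      (natDegree_sum_le_of_forall_le _ _ fun t ht =>
        (natDegree_monomial_le _).trans (Nat.lt_succ_iff.1 (Finset.mem_range.1 ht)))
    refine ⟨U.coeff, B.coeff, fun z hz => ?_, fun z hz => ?_, fun k => ?_⟩
    · rw [← eval_eq_sum_range' (by omega)]
      exact hUz z hz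
    · rw [← eval_eq_sum_range' (by omega)]
      exact hBz z hz
    · rw [hfac, congrArg toLaurent (as_sum_range' U (np + 1) (by omega)),
        congrArg toLaurent (as_sum_range' B (nm + 1) (by omega)),
        coeff_toLaurent_sum_monomial_mul_invert]
  · rintro ⟨u, l, hu, hl, ha⟩
    rw [funext fun k => (ha k).trans (coeff_toLaurent_sum_monomial_mul_invert u l _ _ k).symm]
      at hTa
    exact hTa.isUnit_of_wienerHopf (fun z hz => by simpa [eval_finsetSum] using hu z hz)
      (fun z hz => by simpa [eval_finsetSum] using hl z hz)
end

section
/- Let n be a positive integer, let u = (u_i)_{0 ≤ i ≤ n−1} and l = (l_i)_{0 ≤ i ≤ n−1} be complex coefficient sequences (extended by zero), and define a = (a_k)_{−n+1 ≤ k ≤ n−1} by a_k = ∑_i u_i l_{i−k} (i.e., a(z) = u(z)·l(1/z) is a finite Wiener–Hopf-type factorization). Then the following identity of n×n complex matrices holds: T_{n,n}(a) = T_{n,n}(u) · T_{n,n}(l)ᵀ + J_n · H_{n,n}(u) · H_{n,n}(l) · J_n. -/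
open Matrix

/-!
Entry `(i, j)` of every matrix in the identity is a correlation sum. Reindexing the pairs
`(p, q)` with `p - q = j - i` by `s = p + i = q + j`, the entry `a_{j-i}` becomes
`∑_{s ≥ max(i,j)} u_{s-i} l_{s-j}`, and `u` vanishes from `n` on, so only `s < 2n` contributes.
The terms with `s < n` are the entry of `T(u) T(l)ᵀ`; the terms with `n ≤ s < 2n` are the
entry of `H(u) H(l)` at the reversed indices, which is what conjugating by `J` produces.
-/

namespace WienerHopf

open Finset

variable {R : Type*}

section Matrices

variable [Semiring R] (n : ℕ)

def upperToeplitz (f : ℕ → R) : Matrix (Fin n) (Fin n) R :=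
  of fun i j => if (i : ℕ) ≤ (j : ℕ) then f ((j : ℕ) - (i : ℕ)) else 0

def hankel (f : ℕ → R) : Matrix (Fin n) (Fin n) R :=
  of fun i j => f ((i : ℕ) + (j : ℕ) + 1)

def exchange : Matrix (Fin n) (Fin n) R :=
  of fun i j => if (i : ℕ) + (j : ℕ) = n - 1 then 1 else 0

theorem exchange_eq_toMatrix_revPerm :
    exchange n = (Fin.revPerm.toPEquiv.toMatrix : Matrix _ _ R) := by
  ext i j
  simp only [exchange, of_apply, PEquiv.toMatrix_apply, Equiv.toPEquiv_apply, Option.mem_def,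
    Option.some.injEq, Fin.revPerm_apply, Fin.ext_iff, Fin.val_rev]
  exact if_congr (by omega) rfl rfl

theorem exchange_mul (M : Matrix (Fin n) (Fin n) R) :
    exchange n * M = M.submatrix Fin.rev id := by
  rw [exchange_eq_toMatrix_revPerm, PEquiv.toMatrix_toPEquiv_mul]
  rfl

theorem mul_exchange (M : Matrix (Fin n) (Fin n) R) :
    M * exchange n = M.submatrix id Fin.rev := by
  rw [exchange_eq_toMatrix_revPerm, PEquiv.mul_toMatrix_toPEquiv, Fin.revPerm_symm]
  rfl

theorem exchange_mul_mul_exchange_apply (A B : Matrix (Fin n) (Fin n) R) (i j : Fin n) :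
    (exchange n * A * B * exchange n : Matrix (Fin n) (Fin n) R) i j =
      (A * B) i.rev j.rev := by
  rw [Matrix.mul_assoc (exchange n), exchange_mul, mul_exchange]
  rfl

theorem upperToeplitz_mul_transpose_apply (u l : ℕ → R) (i j : Fin n) :
    (upperToeplitz n u * (upperToeplitz n l)ᵀ) i j =
      ∑ s ∈ range n, if (i : ℕ) ≤ s ∧ (j : ℕ) ≤ s then u (s - i) * l (s - j) else 0 := by
  rw [← Fin.sum_univ_eq_sum_range]
  simp only [mul_apply, transpose_apply, upperToeplitz, of_apply, ite_zero_mul_ite_zero]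

theorem exchange_hankel_mul_hankel_exchange_apply (u l : ℕ → R) (i j : Fin n) :
    (exchange n * hankel n u * hankel n l * exchange n : Matrix (Fin n) (Fin n) R) i j =
      ∑ s ∈ range n, u (n + s - i) * l (n + s - j) := by
  rw [exchange_mul_mul_exchange_apply, mul_apply, ← Fin.sum_univ_eq_sum_range]
  refine Finset.sum_congr rfl fun k _ => ?_
  simp only [hankel, of_apply, Fin.val_rev]
  congr 2 <;> omega

end Matrices

section Correlation

variable [NonUnitalNonAssocSemiring R] [TopologicalSpace R]

theorem tsum_ite_sub_eq_tsum_shift (u l : ℕ → R) (i j : ℕ) :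
    ∑' q : ℕ × ℕ, (if (q.1 : ℤ) - (q.2 : ℤ) = (j : ℤ) - (i : ℤ) then u q.1 * l q.2 else 0) =
      ∑' s : ℕ, if i ≤ s ∧ j ≤ s then u (s - i) * l (s - j) else 0 := by
  have mem_support {s : ℕ} (hs : s ∈ Function.support
      fun s => if i ≤ s ∧ j ≤ s then u (s - i) * l (s - j) else 0) : i ≤ s ∧ j ≤ s :=
    (ite_ne_right_iff.1 hs).1
  refine tsum_eq_tsum_of_ne_zero_bij (fun s => ((s : ℕ) - i, (s : ℕ) - j)) ?_ ?_ ?_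
  · rintro ⟨s, hs⟩ ⟨t, ht⟩ hst
    have hsi := (mem_support hs).1
    have hti := (mem_support ht).1
    have hst : s - i = t - i := congrArg Prod.fst hst
    exact Subtype.ext (show s = t by omega)
  · rintro ⟨p, q⟩ hpq
    obtain ⟨hk, hne⟩ := ite_ne_right_iff.1 hpq
    refine ⟨⟨p + i, ?_⟩, ?_⟩
    · have hdiag : p + i = q + j := by omega
      refine ite_ne_right_iff.2 ⟨⟨by omega, by omega⟩, ?_⟩
      rwa [Nat.add_sub_cancel, hdiag, Nat.add_sub_cancel]
    · ext <;> dsimp <;> omega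
  · rintro ⟨s, hs⟩
    obtain ⟨hi, hj⟩ := mem_support hs
    dsimp only
    rw [if_pos (by omega), if_pos ⟨hi, hj⟩]

theorem tsum_shift_eq_sum_range {n m : ℕ} {u : ℕ → R} (hu : ∀ k, n ≤ k → u k = 0)
    (l : ℕ → R) {i : ℕ} (hi : i ≤ m) (j : ℕ) :
    ∑' s : ℕ, (if i ≤ s ∧ j ≤ s then u (s - i) * l (s - j) else 0) =
      ∑ s ∈ range (n + m), if i ≤ s ∧ j ≤ s then u (s - i) * l (s - j) else 0 := by
  refine tsum_eq_sum fun s hs => ?_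
  rw [hu (s - i) (by rw [mem_range] at hs; omega), zero_mul, ite_self]

end Correlation

end WienerHopf

open WienerHopf in
theorem finite_wiener_hopf_factorization_general
    (n : ℕ) (u l : ℕ → ℂ)
    (hu : ∀ i : ℕ, n ≤ i → u i = 0)
    (a : ℤ → ℂ)
    (ha : ∀ k : ℤ, a k = ∑' q : ℕ × ℕ,
      if (q.1 : ℤ) - (q.2 : ℤ) = k then u q.1 * l q.2 else 0) :
    (Matrix.of fun (i j : Fin n) => a ((j : ℤ) - (i : ℤ))) =
      (Matrix.of fun (i j : Fin n) =>
          if (i : ℕ) ≤ (j : ℕ) then u ((j : ℕ) - (i : ℕ)) else 0) *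
        (Matrix.of fun (i j : Fin n) =>
          if (i : ℕ) ≤ (j : ℕ) then l ((j : ℕ) - (i : ℕ)) else 0)ᵀ +
      (Matrix.of fun (i j : Fin n) =>
          if (i : ℕ) + (j : ℕ) = n - 1 then (1 : ℂ) else 0) *
        (Matrix.of fun (i j : Fin n) => u ((i : ℕ) + (j : ℕ) + 1)) *
        (Matrix.of fun (i j : Fin n) => l ((i : ℕ) + (j : ℕ) + 1)) *
        (Matrix.of fun (i j : Fin n) =>
          if (i : ℕ) + (j : ℕ) = n - 1 then (1 : ℂ) else 0) := by
  change _ = upperToeplitz n u * (upperToeplitz n l)ᵀ +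
    exchange n * hankel n u * hankel n l * exchange n
  ext i j
  rw [of_apply, Matrix.add_apply, ha, tsum_ite_sub_eq_tsum_shift,
    tsum_shift_eq_sum_range hu l i.is_lt.le, Finset.sum_range_add,
    upperToeplitz_mul_transpose_apply, exchange_hankel_mul_hankel_exchange_apply]
  congr 1
  exact Finset.sum_congr rfl fun s _ => if_pos ⟨by omega, by omega⟩

/-- If `u = (u_i)_{0 ≤ i ≤ n-1}` and `l = (l_i)_{0 ≤ i ≤ n-1}` are
complex coefficient sequences (extended by zero) and `a_k = ∑_{i-j=k} u_i l_j` (the finite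
Wiener–Hopf-type factorization `a(z) = u(z) l(1/z)`), then
`T_{n,n}(a) = T_{n,n}(u) T_{n,n}(l)ᵀ + J_n H_{n,n}(u) H_{n,n}(l) J_n`,
where `T_{n,n}(x)_{i,j} = x_{j-i}`, `H_{n,n}(f)_{i,j} = f_{i+j-1}` (1-based indices),
and `J_n` is the `n × n` flip matrix. -/
theorem finite_wiener_hopf_factorization
    (n : ℕ) (hn : 0 < n) (u l : ℕ → ℂ)
    (hu : ∀ i : ℕ, n ≤ i → u i = 0) (hl : ∀ i : ℕ, n ≤ i → l i = 0)
    (a : ℤ → ℂ)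
    (ha : ∀ k : ℤ, a k = ∑' q : ℕ × ℕ,
      if (q.1 : ℤ) - (q.2 : ℤ) = k then u q.1 * l q.2 else 0) :
    (Matrix.of fun (i j : Fin n) => a ((j : ℤ) - (i : ℤ))) =
      (Matrix.of fun (i j : Fin n) =>
          if (i : ℕ) ≤ (j : ℕ) then u ((j : ℕ) - (i : ℕ)) else 0) *
        (Matrix.of fun (i j : Fin n) =>
          if (i : ℕ) ≤ (j : ℕ) then l ((j : ℕ) - (i : ℕ)) else 0)ᵀ +
      (Matrix.of fun (i j : Fin n) =>
          if (i : ℕ) + (j : ℕ) = n - 1 then (1 : ℂ) else 0) *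
        (Matrix.of fun (i j : Fin n) => u ((i : ℕ) + (j : ℕ) + 1)) *
        (Matrix.of fun (i j : Fin n) => l ((i : ℕ) + (j : ℕ) + 1)) *
        (Matrix.of fun (i j : Fin n) =>
          if (i : ℕ) + (j : ℕ) = n - 1 then (1 : ℂ) else 0) :=
  finite_wiener_hopf_factorization_general n u l hu a ha
end

section
/- Let p be a positive integer and let L₀, L₁, U₀, U₁ be p×p complex matrices with L₀ and U₀ invertible. Define A_{−1} = U₀L₁, A₀ = U₀L₀ + U₁L₁, A₁ = U₁L₀, and set G = −L₀^{−1}L₁ and R = −U₁U₀^{−1}. Then G and R are solutions of the two quadratic matrix equations A₁G² + A₀G + A_{−1} = 0 and R²A_{−1} + RA₀ + A₁ = 0. -/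
/-- Let `L₀, L₁, U₀, U₁` be `p × p` complex matrices with `L₀, U₀`
invertible, and let `A₋₁ = U₀L₁`, `A₀ = U₀L₀ + U₁L₁`, `A₁ = U₁L₀` be the blocks of the
block UL factorization of the associated block-tridiagonal block-Toeplitz operator. Then
`G = -L₀⁻¹L₁` and `R = -U₁U₀⁻¹` solve the quadratic matrix equations
`A₁G² + A₀G + A₋₁ = 0` and `R²A₋₁ + RA₀ + A₁ = 0`. -/
theorem ul_factorization_quadratic_solutions
    (p : ℕ) (L0 L1 U0 U1 : Matrix (Fin p) (Fin p) ℂ)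
    (hL0 : IsUnit L0) (hU0 : IsUnit U0) :
    (U1 * L0) * (-(L0⁻¹ * L1)) ^ 2 + (U0 * L0 + U1 * L1) * (-(L0⁻¹ * L1)) +
        U0 * L1 = 0 ∧
    (-(U1 * U0⁻¹)) ^ 2 * (U0 * L1) + (-(U1 * U0⁻¹)) * (U0 * L0 + U1 * L1) +
        U1 * L0 = 0 := by
  have hL : L0 * L0⁻¹ = 1 := Matrix.mul_nonsing_inv _ (Matrix.isUnit_iff_isUnit_det L0 |>.mp hL0)
  have hU : U0⁻¹ * U0 = 1 := Matrix.nonsing_inv_mul _ (Matrix.isUnit_iff_isUnit_det U0 |>.mp hU0)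
  constructor
  · rw [show (U1 * L0) * (-(L0⁻¹ * L1)) ^ 2 + (U0 * L0 + U1 * L1) * (-(L0⁻¹ * L1)) + U0 * L1
        = U1 * (L0 * L0⁻¹) * L1 * (L0⁻¹ * L1) - U0 * (L0 * L0⁻¹) * L1
          - U1 * L1 * (L0⁻¹ * L1) + U0 * L1 from by noncomm_ring, hL]
    noncomm_ring
  · rw [show (-(U1 * U0⁻¹)) ^ 2 * (U0 * L1) + (-(U1 * U0⁻¹)) * (U0 * L0 + U1 * L1) + U1 * L0
        = U1 * U0⁻¹ * U1 * (U0⁻¹ * U0) * L1 - U1 * (U0⁻¹ * U0) * L0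
          - U1 * U0⁻¹ * (U1 * L1) + U1 * L0 from by noncomm_ring, hU]
    noncomm_ring
end

section
/- Let a(z) = ∑_{j=−n₋}^{n₊} a_j z^j be a Laurent polynomial admitting a Wiener–Hopf factorization a(z) = u(z)·l(1/z), where u(z) = ∑_{i=0}^{n₊} u_i z^i and l(z) = ∑_{i=0}^{n₋} l_i z^i are polynomials nonvanishing on the closed unit disk (so in particular u₀ ≠ 0). Let h = (h_k)_{k∈ℤ} be the absolutely summable Laurent coefficient sequence of a(z)^{−1}, i.e., the unique Wiener-class sequence with ∑_m a_m h_{k−m} = δ_{k,0} for all k ∈ ℤ. Then for every integer i ≥ 1: ∑_{j=0}^{n₋} h_{j+1−i} · l_j = u₀^{−1} if i = 1, and ∑_{j=0}^{n₋} h_{j+1−i} · l_j = 0 if i ≥ 2. (In other words, multiplying the semi-infinite Toeplitz matrix (h_{j−i}) by the coefficient vector of l yields u₀^{−1} times the first unit vector, so a finite Toeplitz section of a^{−1} recovers the Wiener–Hopf factor l up to a normalization constant.) -/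
/-!
Because `U(z) = ∑ uᵢ zⁱ` has no zeros on the closed unit disc, `1/U` is holomorphic on a
strictly larger disc, so its Taylor coefficients form a causal absolutely summable sequence `V`
with `u * V = δ₀`. The sequence `w_k = ∑ⱼ h_{k+j} lⱼ` is bounded, and `a = u · l(1/z)` turns
`a * h = δ₀` into `u * w = δ₀`. Associativity `w = (V * u) * w = V * (u * w) = V`, legitimate
since `V` is summable, `u` finite and `w` bounded, then gives `∑ⱼ h_{j+1-i} lⱼ = V_{1-i}`, which
is `V₀ = u₀⁻¹` for `i = 1` and `0` for `i ≥ 2` by causality.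
-/

open Finset Metric Filter Topology

theorem exists_gt_forall_mem_closedBall_ne_zero {E F : Type*} [NormedAddCommGroup E]
    [NormedSpace ℝ E] [ProperSpace E] [NormedAddCommGroup F] {f : E → F} (hf : Continuous f)
    {x : E} {r : ℝ} (hr : 0 ≤ r) (hx : ∀ z ∈ closedBall x r, f z ≠ 0) :
    ∃ R > r, ∀ z ∈ closedBall x R, f z ≠ 0 := by
  obtain ⟨δ, hδ, hsub⟩ := (isCompact_closedBall x r).exists_cthickening_subset_open
    (isOpen_ne_fun hf continuous_const) hx
  refine ⟨δ + r, by linarith, fun z hz => hsub ?_⟩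
  rwa [cthickening_closedBall hδ.le hr]

theorem DifferentiableOn.exists_summable_norm_hasSum_pow_smul {E : Type*}
    [NormedAddCommGroup E] [NormedSpace ℂ E] [CompleteSpace E] {f : ℂ → E} {R : ℝ} (hR : 1 < R)
    (hf : DifferentiableOn ℂ f (closedBall 0 R)) :
    ∃ c : ℕ → E, Summable (fun n => ‖c n‖) ∧
      ∀ z : ℂ, ‖z‖ < 1 → HasSum (fun n => z ^ n • c n) (f z) := by
  lift R to NNReal using by linarith
  have hps := hf.hasFPowerSeriesOnBall (by exact_mod_cast zero_lt_one.trans hR)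
  refine ⟨(cauchyPowerSeries f 0 R).coeff, ?_, fun z hz => ?_⟩
  · simpa [FormalMultilinearSeries.norm_apply_eq_norm_coef] using
      (cauchyPowerSeries f 0 R).summable_norm_mul_pow (r := 1)
        ((by exact_mod_cast hR : ((1 : NNReal) : ENNReal) < R).trans_le hps.r_le)
  · have hz : z ∈ eball (0 : ℂ) R := by
      rw [mem_eball, edist_zero_right, enorm_eq_nnnorm, ENNReal.coe_lt_coe, ← NNReal.coe_lt_coe,
        coe_nnnorm]
      exact hz.trans hR
    simpa [FormalMultilinearSeries.apply_eq_pow_smul_coeff] using hps.hasSum hz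

theorem eq_of_eventually_hasSum_pow_smul {𝕜 E : Type*} [NontriviallyNormedField 𝕜]
    [NormedAddCommGroup E] [NormedSpace 𝕜 E] {f : 𝕜 → E} {c d : ℕ → E}
    (hc : ∀ᶠ z in 𝓝 0, HasSum (fun n => z ^ n • c n) (f z))
    (hd : ∀ᶠ z in 𝓝 0, HasSum (fun n => z ^ n • d n) (f z)) : c = d := by
  let series (e : ℕ → E) : FormalMultilinearSeries 𝕜 𝕜 E :=
    fun n => ContinuousMultilinearMap.mkPiRing 𝕜 (Fin n) (e n)
  have hcoeff (e : ℕ → E) : (series e).coeff = e := by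
    ext n
    simp [series, FormalMultilinearSeries.coeff]
  have hseries (e : ℕ → E) (he : ∀ᶠ z in 𝓝 0, HasSum (fun n => z ^ n • e n) (f z)) :
      HasFPowerSeriesAt f (series e) 0 :=
    hasFPowerSeriesAt_iff.mpr (by simpa [hcoeff] using he)
  rw [← hcoeff c, ← hcoeff d, (hseries c hc).eq_formalMultilinearSeries (hseries d hd)]

theorem hasSum_pow_mul_sum_mul_sub {R : Type*} [CommRing R] [TopologicalSpace R]
    [IsTopologicalRing R] {V : ℤ → R} (hV : ∀ k < 0, V k = 0) {y S : R}
    (hS : HasSum (fun n : ℕ => y ^ n * V n) S) (s : Finset ℕ) (u : ℕ → R) :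
    HasSum (fun m : ℕ => y ^ m * ∑ i ∈ s, u i * V (m - i)) ((∑ i ∈ s, u i * y ^ i) * S) := by
  simp_rw [mul_sum, sum_mul]
  refine hasSum_sum fun i _ => (hasSum_nat_add_iff' i).mp ?_
  have hlow : ∑ m ∈ range i, y ^ m * (u i * V (m - i)) = 0 :=
    sum_eq_zero fun m hm => by rw [hV _ (by simp at hm; omega), mul_zero, mul_zero]
  have hshift : (fun n : ℕ => y ^ (n + i : ℕ) * (u i * V (((n + i : ℕ) : ℤ) - i))) =
      fun n : ℕ => u i * y ^ i * (y ^ n * V n) := by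
    funext n
    rw [Nat.cast_add, add_sub_cancel_right, pow_add]
    ring
  rw [hlow, sub_zero]
  exact hshift ▸ hS.mul_left (u i * y ^ i)

theorem exists_summable_causal_inverse (N : ℕ) (u : ℕ → ℂ)
    (hu : ∀ z : ℂ, ‖z‖ ≤ 1 → ∑ i ∈ range N, u i * z ^ i ≠ 0) :
    ∃ V : ℤ → ℂ, Summable (fun k => ‖V k‖) ∧ (∀ k < 0, V k = 0) ∧
      ∀ k, ∑ i ∈ range N, u i * V (k - i) = if k = 0 then 1 else 0 := by
  set U : ℂ → ℂ := fun z => ∑ i ∈ range N, u i * z ^ i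
  have hU : Differentiable ℂ U := by fun_prop
  obtain ⟨R, hR, hUR⟩ := exists_gt_forall_mem_closedBall_ne_zero hU.continuous zero_le_one
    fun z hz => hu z (mem_closedBall_zero_iff.mp hz)
  obtain ⟨c, hc, hcU⟩ :=
    (hU.differentiableOn.inv hUR).exists_summable_norm_hasSum_pow_smul (E := ℂ) hR
  set V : ℤ → ℂ := fun k => if 0 ≤ k then c k.toNat else 0
  have hV_nat (n : ℕ) : V n = c n := by simp [V]
  have hV_neg : ∀ k < 0, V k = 0 := fun k hk => if_neg hk.not_ge
  have hV_sum : Summable fun k => ‖V k‖ := by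
    refine (Nat.cast_injective.summable_iff fun k hk => ?_).mp
      (by simpa [Function.comp_def, hV_nat] using hc)
    rw [hV_neg k (by simpa using hk), norm_zero]
  have hconv :
      (fun m : ℕ => ∑ i ∈ range N, u i * V (m - i)) = fun m => if m = 0 then 1 else 0 := by
    refine eq_of_eventually_hasSum_pow_smul (𝕜 := ℂ) (f := fun _ => 1) ?_
      (.of_forall fun z => ?_)
    · filter_upwards [ball_mem_nhds (0 : ℂ) one_pos] with z hz
      rw [mem_ball_zero_iff] at hz
      have := hasSum_pow_mul_sum_mul_sub hV_neg (S := (U z)⁻¹)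
        (by simpa [hV_nat] using hcU z hz) (range N) u
      rw [mul_inv_cancel₀ (hu z hz.le)] at this
      simpa using this
    · have hδ : (fun n : ℕ => z ^ n • if n = 0 then (1 : ℂ) else 0) =
          fun n => if n = 0 then 1 else 0 := by
        funext n
        split_ifs with hn <;> simp [hn]
      rw [hδ]
      exact hasSum_ite_eq 0 1
  refine ⟨V, hV_sum, hV_neg, fun k => ?_⟩
  rcases lt_or_ge k 0 with hk | hk
  · rw [if_neg hk.ne]
    exact sum_eq_zero fun i _ => by rw [hV_neg _ (by omega), mul_zero]
  · lift k to ℕ using hk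
    simpa using congrFun hconv k

theorem apply_zero_eq_inv_of_sum_mul_neg_eq_one {K : Type*} [DivisionRing K] {N : ℕ}
    {u : ℕ → K} {V : ℤ → K} (hV : ∀ k < 0, V k = 0)
    (huV : ∑ i ∈ range (N + 1), u i * V (-i) = 1) : V 0 = (u 0)⁻¹ := by
  rw [sum_range_succ', sum_eq_zero fun i _ => by rw [hV _ (by omega), mul_zero], zero_add] at huV
  exact eq_inv_of_mul_eq_one_right (by simpa using huV)

theorem tsum_mul_sub_eq_sum_mul_sum_of_eq_sum_ite {R : Type*} [CommRing R] [TopologicalSpace R]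
    [ContinuousAdd R] [T2Space R] {s t : Finset ℕ} {u l : ℕ → R} {a : ℤ → R}
    (ha : ∀ k, a k = ∑ i ∈ s, ∑ j ∈ t, if (i : ℤ) - j = k then u i * l j else 0)
    (h : ℤ → R) (k : ℤ) :
    ∑' m, a m * h (k - m) = ∑ i ∈ s, u i * ∑ j ∈ t, h (k - i + j) * l j := by
  have hterm (m : ℤ) : a m * h (k - m) =
      ∑ i ∈ s, ∑ j ∈ t, if m = i - j then u i * (h (k - i + j) * l j) else 0 := by
    simp_rw [ha, sum_mul]
    refine sum_congr rfl fun i _ => sum_congr rfl fun j _ => ?_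
    by_cases hm : m = i - j
    · subst hm
      rw [if_pos rfl, if_pos rfl, sub_sub_eq_add_sub, add_sub_right_comm]
      ring
    · rw [if_neg (Ne.symm hm), if_neg hm, zero_mul]
  simp_rw [mul_sum]
  exact (tsum_congr hterm).trans
    (hasSum_sum fun i _ => hasSum_sum fun j _ => hasSum_ite_eq _ _).tsum_eq

theorem norm_sum_shift_mul_le {R : Type*} [NormedRing R] {h : ℤ → R}
    (hh : Summable fun k => ‖h k‖) (t : Finset ℕ) (l : ℕ → R) (k : ℤ) :
    ‖∑ j ∈ t, h (k + j) * l j‖ ≤ (∑' k, ‖h k‖) * ∑ j ∈ t, ‖l j‖ := by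
  rw [mul_sum]
  refine (norm_sum_le _ _).trans (sum_le_sum fun j _ => (norm_mul_le _ _).trans ?_)
  gcongr
  exact hh.le_tsum _ fun _ _ => norm_nonneg _

theorem eq_of_sum_mul_sub_eq_ite {R : Type*} [NormedCommRing R] [CompleteSpace R]
    {s : Finset ℕ} {u : ℕ → R} {V w : ℤ → R} {C : ℝ} (hV : Summable fun k => ‖V k‖)
    (hw : ∀ k, ‖w k‖ ≤ C) (huV : ∀ k, ∑ i ∈ s, u i * V (k - i) = if k = 0 then 1 else 0)
    (huw : ∀ k, ∑ i ∈ s, u i * w (k - i) = if k = 0 then 1 else 0) : w = V := by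
  have hsummable (b : R) {f : ℤ → ℤ} (hf : f.Injective) (g : ℤ → ℤ) :
      Summable fun r => b * V (f r) * w (g r) := by
    refine .of_norm_bounded ((hV.comp_injective hf).mul_left (‖b‖ * C)) fun r => ?_
    calc ‖b * V (f r) * w (g r)‖ ≤ ‖b‖ * ‖V (f r)‖ * ‖w (g r)‖ := by
          grw [norm_mul_le, norm_mul_le]
      _ ≤ ‖b‖ * ‖V (f r)‖ * C := by gcongr; exact hw _
      _ = ‖b‖ * C * ‖V (f r)‖ := by ring
  funext m
  calc w m = ∑' t, (∑ i ∈ s, u i * V (t - i)) * w (m - t) := by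
        simp only [huV, ite_mul, one_mul, zero_mul, tsum_ite_eq, sub_zero]
    _ = ∑ i ∈ s, ∑' t, u i * V (t - i) * w (m - t) := by
        simp_rw [sum_mul]
        exact Summable.tsum_finsetSum fun i _ => hsummable _ sub_left_injective _
    _ = ∑ i ∈ s, ∑' r, u i * V r * w (m - r - i) := by
        refine sum_congr rfl fun i _ => ((Equiv.addRight (i : ℤ)).tsum_eq _).symm.trans ?_
        simp only [Equiv.coe_addRight, add_sub_cancel_right, sub_add_eq_sub_sub]
    _ = ∑' r, ∑ i ∈ s, u i * V r * w (m - r - i) := by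
        refine (Summable.tsum_finsetSum fun i _ => ?_).symm
        simpa using hsummable (u i) Function.injective_id (fun r => m - r - i)
    _ = ∑' r, V r * ∑ i ∈ s, u i * w (m - r - i) := by
        simp_rw [mul_sum, mul_left_comm (V _), mul_assoc]
    _ = V m := by
        simp only [huw, sub_eq_zero, mul_ite, mul_one, mul_zero, eq_comm (a := m), tsum_ite_eq]

theorem toeplitz_of_inverse_symbol_recovers_factor_general
    (nm np : ℕ) (a : ℤ → ℂ)
    (u l : ℕ → ℂ)
    (hu_nv : ∀ z : ℂ, ‖z‖ ≤ 1 → ∑ i ∈ Finset.range (np + 1), u i * z ^ i ≠ 0)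
    (hfact : ∀ k : ℤ, a k =
      ∑ i ∈ Finset.range (np + 1), ∑ j ∈ Finset.range (nm + 1),
        if (i : ℤ) - (j : ℤ) = k then u i * l j else 0)
    (h : ℤ → ℂ) (hh_sum : Summable fun k : ℤ => ‖h k‖)
    (hh : ∀ k : ℤ, (∑' m : ℤ, a m * h (k - m)) = if k = 0 then 1 else 0) :
    ∀ i : ℕ, 1 ≤ i →
      (∑ j ∈ Finset.range (nm + 1), h ((j : ℤ) + 1 - (i : ℤ)) * l j) =
        if i = 1 then (u 0)⁻¹ else 0 := by
  intro i hi
  obtain ⟨V, hV, hV_neg, huV⟩ := exists_summable_causal_inverse (np + 1) u hu_nv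
  set w : ℤ → ℂ := fun k => ∑ j ∈ range (nm + 1), h (k + j) * l j
  have huw (k : ℤ) : ∑ i ∈ range (np + 1), u i * w (k - i) = if k = 0 then 1 else 0 := by
    rw [← hh k, tsum_mul_sub_eq_sum_mul_sum_of_eq_sum_ite hfact]
  have hwV : w = V := eq_of_sum_mul_sub_eq_ite hV (norm_sum_shift_mul_le hh_sum _ l) huV huw
  have hw : ∑ j ∈ range (nm + 1), h (j + 1 - i) * l j = w (1 - i) :=
    sum_congr rfl fun j _ => by ring_nf
  rw [hw, hwV]
  split_ifs with hi1
  · subst hi1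
    exact apply_zero_eq_inv_of_sum_mul_neg_eq_one hV_neg (by simpa using huV 0)
  · exact hV_neg _ (by omega)

/-- Let `a(z) = ∑_{j=-n₋}^{n₊} a_j z^j` admit a Wiener–Hopf
factorization `a(z) = u(z) l(1/z)` with `u, l` polynomials nonvanishing on the closed unit
disk, and let `h` be the absolutely summable Laurent coefficient sequence of `a(z)⁻¹`,
i.e. the Wiener-class sequence with `a * h = δ₀` (convolution). Then, for every `i ≥ 1`,
`∑_{j=0}^{n₋} h_{j+1-i} l_j` equals `u₀⁻¹` if `i = 1` and `0` if `i ≥ 2`: multiplying the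
semi-infinite Toeplitz matrix `(h_{j-i})` by the coefficient vector of `l` yields `u₀⁻¹`
times the first unit vector, so a finite Toeplitz section of `a⁻¹` recovers the
Wiener–Hopf factor `l` up to a normalization constant. -/
theorem toeplitz_of_inverse_symbol_recovers_factor
    (nm np : ℕ) (a : ℤ → ℂ)
    (hsupp : ∀ k : ℤ, (k < -(nm : ℤ) ∨ (np : ℤ) < k) → a k = 0)
    (u l : ℕ → ℂ)
    (hu_supp : ∀ i : ℕ, np < i → u i = 0) (hl_supp : ∀ i : ℕ, nm < i → l i = 0)
    (hu_nv : ∀ z : ℂ, ‖z‖ ≤ 1 → ∑ i ∈ Finset.range (np + 1), u i * z ^ i ≠ 0)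
    (hl_nv : ∀ z : ℂ, ‖z‖ ≤ 1 → ∑ i ∈ Finset.range (nm + 1), l i * z ^ i ≠ 0)
    (hfact : ∀ k : ℤ, a k =
      ∑ i ∈ Finset.range (np + 1), ∑ j ∈ Finset.range (nm + 1),
        if (i : ℤ) - (j : ℤ) = k then u i * l j else 0)
    (h : ℤ → ℂ) (hh_sum : Summable fun k : ℤ => ‖h k‖)
    (hh : ∀ k : ℤ, (∑' m : ℤ, a m * h (k - m)) = if k = 0 then 1 else 0) :
    ∀ i : ℕ, 1 ≤ i →
      (∑ j ∈ Finset.range (nm + 1), h ((j : ℤ) + 1 - (i : ℤ)) * l j) =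
        if i = 1 then (u 0)⁻¹ else 0 :=
  toeplitz_of_inverse_symbol_recovers_factor_general nm np a u l hu_nv hfact h hh_sum hh
end

section
/- Let p(z) = ∑_{i=0}^{d} p_i z^i be a complex polynomial with p(z) ≠ 0 for all z in the closed unit disk {z ∈ ℂ : |z| ≤ 1}. Then the formal power series inverse v = ∑_{k≥0} v_k z^k of p (the unique power series with p·v = 1) has absolutely summable coefficients: ∑_{k≥0} |v_k| < ∞. (Hence the reciprocal of a Wiener–Hopf factor nonvanishing on the closed unit disk again belongs to the Wiener class.) -/
/-!
Over an algebraically closed field the polynomial factors as `p = c ∏ (X - α)`, and every root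
satisfies `|α| > 1`.
The formal inverse of `X - α` is `-∑ α^{-(k+1)} X^k`, whose coefficients are summable
geometrically, and absolutely summable coefficient sequences are closed under Cauchy products.
Hence `c⁻¹ ∏ (X - α)⁻¹` lies in the Wiener class, and it is the formal inverse of `p`.
-/

open PowerSeries

namespace PowerSeries

section NormedRing

variable {R : Type*} [NormedRing R]

theorem summable_norm_coeff_C (a : R) : Summable fun n => ‖coeff n (C a)‖ :=
  summable_of_ne_finset_zero (s := {0}) fun n hn => by
    simp [coeff_C, Finset.notMem_singleton.mp hn]

variable (R) in
def wienerSubring : Subring R⟦X⟧ where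
  carrier := {f | Summable fun n => ‖coeff n f‖}
  mul_mem' {f g} hf hg := by
    change Summable fun n => ‖coeff n (f * g)‖
    simpa only [coeff_mul] using summable_norm_sum_mul_antidiagonal_of_summable_norm hf hg
  one_mem' := by
    change Summable fun n => ‖coeff n 1‖
    simpa only [map_one] using summable_norm_coeff_C (1 : R)
  add_mem' {f g} hf hg := by
    change Summable fun n => ‖coeff n (f + g)‖
    exact .of_nonneg_of_le (fun _ => norm_nonneg _)
      (fun n => (map_add (coeff n) f g).symm ▸ norm_add_le _ _) (hf.add hg)
  zero_mem' := by
    change Summable fun n => ‖coeff n 0‖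
    simp
  neg_mem' {f} hf := by
    change Summable fun n => ‖coeff n (-f)‖
    change Summable fun n => ‖coeff n f‖ at hf
    simpa only [map_neg, norm_neg] using hf

theorem mem_wienerSubring {f : R⟦X⟧} : f ∈ wienerSubring R ↔ Summable fun n => ‖coeff n f‖ :=
  Iff.rfl

end NormedRing

section Field

variable {𝕜 : Type*}

def invXSubC [Field 𝕜] (α : 𝕜) : 𝕜⟦X⟧ :=
  mk fun n => -α⁻¹ ^ (n + 1)

theorem X_sub_C_mul_invXSubC [Field 𝕜] {α : 𝕜} (hα : α ≠ 0) : (X - C α) * invXSubC α = 1 := by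
  have : invXSubC α = -invUnitsSub (Units.mk0 α hα) := by
    ext n
    simp [invXSubC, coeff_invUnitsSub]
  rw [this, mul_neg, ← neg_mul, neg_sub, mul_comm]
  exact invUnitsSub_mul_sub (Units.mk0 α hα)

theorem prod_X_sub_C_mul_prod_invXSubC [Field 𝕜] {s : Multiset 𝕜} (hs : ∀ α ∈ s, α ≠ 0) :
    (s.map fun α => X - C α).prod * (s.map invXSubC).prod = 1 := by
  rw [← Multiset.prod_map_mul, Multiset.map_congr rfl fun α hα => X_sub_C_mul_invXSubC (hs α hα),
    Multiset.prod_map_one]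

theorem invXSubC_mem_wienerSubring [NormedField 𝕜] {α : 𝕜} (hα : 1 < ‖α‖) :
    invXSubC α ∈ wienerSubring 𝕜 := by
  have hr : ‖α⁻¹‖ < 1 := by rw [norm_inv]; exact inv_lt_one_of_one_lt₀ hα
  simpa [mem_wienerSubring, invXSubC, pow_succ', mul_inv] using
    (summable_geometric_of_lt_one (norm_nonneg _) hr).mul_left ‖α⁻¹‖

end Field

end PowerSeries

namespace Polynomial

variable {𝕜 : Type*} [NormedField 𝕜] [IsAlgClosed 𝕜]

theorem exists_mul_eq_one_mem_wienerSubring {Q : 𝕜[X]}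
    (hQ : ∀ z : 𝕜, ‖z‖ ≤ 1 → Q.eval z ≠ 0) :
    ∃ W ∈ wienerSubring 𝕜, (Q : 𝕜⟦X⟧) * W = 1 := by
  have hQ0 : Q ≠ 0 := fun h => hQ 0 (by simp) (by simp [h])
  have hroots : ∀ α ∈ Q.roots, 1 < ‖α‖ := fun α hα => by
    by_contra! h
    exact hQ α h (isRoot_of_mem_roots hα)
  refine ⟨PowerSeries.C Q.leadingCoeff⁻¹ * (Q.roots.map invXSubC).prod,
    Subring.mul_mem _ (summable_norm_coeff_C _)
      (multiset_prod_mem _ fun f hf => ?_), ?_⟩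
  · obtain ⟨α, hα, rfl⟩ := Multiset.mem_map.mp hf
    exact invXSubC_mem_wienerSubring (hroots α hα)
  · have hQ_coe : (Q : 𝕜⟦X⟧) = PowerSeries.C Q.leadingCoeff *
        (Q.roots.map fun α => PowerSeries.X - PowerSeries.C α).prod := by
      conv_lhs => rw [← C_leadingCoeff_mul_prod_multiset_X_sub_C
        (IsAlgClosed.card_roots_eq_natDegree (p := Q))]
      rw [← coeToPowerSeries.ringHom_apply, map_mul, map_multiset_prod, Multiset.map_map]
      simp [Function.comp_def]
    rw [hQ_coe, mul_mul_mul_comm, ← map_mul, mul_inv_cancel₀ (leadingCoeff_ne_zero.mpr hQ0),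
      map_one, one_mul, prod_X_sub_C_mul_prod_invXSubC fun α hα =>
        norm_pos_iff.mp (one_pos.trans (hroots α hα))]

theorem mem_wienerSubring_of_mul_eq_one {Q : 𝕜[X]} (hQ : ∀ z : 𝕜, ‖z‖ ≤ 1 → Q.eval z ≠ 0)
    {V : 𝕜⟦X⟧} (hV : (Q : 𝕜⟦X⟧) * V = 1) : V ∈ wienerSubring 𝕜 := by
  obtain ⟨W, hW, hQW⟩ := exists_mul_eq_one_mem_wienerSubring hQ
  have hVW : V = W := calc
    V = Q * W * V := by rw [hQW, one_mul]
    _ = W := by rw [mul_right_comm, hV, one_mul]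
  exact hVW ▸ hW

end Polynomial

/-- Let `p(z) = ∑_{i=0}^d p_i z^i` be a complex polynomial nonvanishing
on the closed unit disk. Then the formal power series inverse `v` of `p` (the unique power
series with `p·v = 1`, determined by `p₀ v₀ = 1` and `∑_i p_i v_{n-i} = 0` for `n ≥ 1`)
has absolutely summable coefficients: `∑_{k≥0} |v_k| < ∞`. Hence the reciprocal of a
Wiener–Hopf factor nonvanishing on the closed unit disk belongs to the Wiener class. -/
theorem inverse_of_nonvanishing_polynomial_is_wiener
    (d : ℕ) (p : ℕ → ℂ) (hp_supp : ∀ i : ℕ, d < i → p i = 0)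
    (hp : ∀ z : ℂ, ‖z‖ ≤ 1 → ∑ i ∈ Finset.range (d + 1), p i * z ^ i ≠ 0)
    (v : ℕ → ℂ)
    (hv : ∀ n : ℕ, ∑ i ∈ Finset.range (n + 1), p i * v (n - i) =
      if n = 0 then 1 else 0) :
    Summable fun k : ℕ => ‖v k‖ := by
  let P : Polynomial ℂ := ∑ i ∈ Finset.range (d + 1), Polynomial.monomial i (p i)
  have hP_coe : (P : ℂ⟦X⟧) = mk p := by
    ext n
    simpa [P, Polynomial.coeff_monomial] using fun h => (hp_supp n h).symm
  have hP_eval (z : ℂ) : P.eval z = ∑ i ∈ Finset.range (d + 1), p i * z ^ i := by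
    simp [P, Polynomial.eval_finsetSum]
  have hpv : mk p * mk v = 1 := by
    ext n
    rw [coeff_mul,
      Finset.Nat.sum_antidiagonal_eq_sum_range_succ fun i j => coeff i (mk p) * coeff j (mk v)]
    simpa [coeff_one] using hv n
  have hv_mem : mk v ∈ wienerSubring ℂ :=
    Polynomial.mem_wienerSubring_of_mul_eq_one (fun z hz => hP_eval z ▸ hp z hz) (hP_coe ▸ hpv)
  simpa only [coeff_mk] using mem_wienerSubring.mp hv_mem
end
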